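/- arXiv:1108.4652 — 14 statements merged into one kernel-verified Lean document; each statement's English description precedes it below -/
import Mathlib

section
/- Let $a_1,\dots,a_n$ be real numbers and $b_1,\dots,b_n$ be positive real numbers with the $b_i$ pairwise distinct and all $a_i$ nonzero. Then the function $\lambda \mapsto \sum_{i=1}^n a_i b_i^{\lambda}$ has at most $n-1$ real zeros. -/
/-!
Descartes-type bound by induction on the number of terms. Dividing by `b_j ^ t` does not change
the zeros and turns the `j`-th term into a constant, so the derivative is an exponential sum with
one term fewer, still with distinct positive bases `b_i / b_j` and nonzero coefficients
`a_i log (b_i / b_j)`. By Rolle's theorem a function has at most one more zero than its derivative.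
-/

open Real Finset

theorem Real.encard_zeros_le_encard_zeros_deriv_add_one {f f' : ℝ → ℝ}
    (hf : ∀ x, HasDerivAt f (f' x) x) :
    {x | f x = 0}.encard ≤ {x | f' x = 0}.encard + 1 := by
  obtain hZ' | hZ' := {x | f' x = 0}.finite_or_infinite
  swap
  · simp [hZ'.encard_eq]
  by_contra! hlt
  rw [hZ'.encard_eq_coe_toFinset_card] at hlt
  obtain ⟨t, htZ, htcard⟩ := Set.exists_subset_encard_eq (Order.add_one_le_of_lt hlt)
  have ht : t.Finite := Set.finite_of_encard_eq_coe htcard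
  have hinterleaved : ∀ x ∈ ht.toFinset, ∀ y ∈ ht.toFinset, x < y →
      (∀ z ∈ ht.toFinset, z ∉ Set.Ioo x y) → ∃ z ∈ hZ'.toFinset, x < z ∧ z < y := by
    intro x hx y hy hxy _
    rw [Set.Finite.mem_toFinset] at hx hy
    obtain ⟨z, hz, hz'⟩ := exists_hasDerivAt_eq_zero hxy
      (fun z _ => (hf z).continuousAt.continuousWithinAt)
      ((htZ hx).trans (htZ hy).symm) (fun z _ => hf z)
    exact ⟨z, by simpa using hz', hz⟩
  have hcard := (card_le_sdiff_of_interleaved hinterleaved).trans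
    (Nat.add_le_add_right (card_le_card sdiff_subset) 1)
  rw [ht.encard_eq_coe_toFinset_card] at htcard
  norm_cast at htcard
  omega

variable {ι : Type*} {s : Finset ι} {a b : ι → ℝ}

theorem hasDerivAt_sum_mul_rpow (hb : ∀ i ∈ s, 0 < b i) (t : ℝ) :
    HasDerivAt (fun t => ∑ i ∈ s, a i * b i ^ t) (∑ i ∈ s, a i * log (b i) * b i ^ t) t := by
  refine HasDerivAt.fun_sum fun i hi => ?_
  exact ((hasStrictDerivAt_const_rpow (hb i hi) t).hasDerivAt.const_mul (a i)).congr_deriv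
    (by ring)

theorem sum_mul_div_rpow (hb : ∀ i ∈ s, 0 ≤ b i) {c : ℝ} (hc : 0 ≤ c) (t : ℝ) :
    ∑ i ∈ s, a i * (b i / c) ^ t = (∑ i ∈ s, a i * b i ^ t) / c ^ t := by
  rw [sum_div]
  exact sum_congr rfl fun i hi => by rw [div_rpow (hb i hi) hc, mul_div_assoc]

theorem encard_zeros_sum_mul_rpow_lt_card (hs : s.Nonempty) (hb : ∀ i ∈ s, 0 < b i)
    (hbinj : Set.InjOn b s) (ha : ∀ i ∈ s, a i ≠ 0) :
    {t : ℝ | ∑ i ∈ s, a i * b i ^ t = 0}.encard < s.card := by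
  induction hs using Finset.Nonempty.cons_induction generalizing a b with
  | singleton j =>
    have hj := mem_singleton_self j
    simp [ha j hj, (rpow_pos_of_pos (hb j hj) _).ne']
  | cons j s hj hs ih =>
    have hc : 0 < b j := hb j (mem_cons_self j s)
    have hzeros : {t : ℝ | ∑ i ∈ s.cons j hj, a i * b i ^ t = 0}
        = {t : ℝ | ∑ i ∈ s.cons j hj, a i * (b i / b j) ^ t = 0} := by
      ext t
      simp [sum_mul_div_rpow (fun i hi => (hb i hi).le) hc.le, (rpow_pos_of_pos hc t).ne']
    have hderiv (t : ℝ) : HasDerivAt (fun t => ∑ i ∈ s.cons j hj, a i * (b i / b j) ^ t)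
        (∑ i ∈ s, a i * log (b i / b j) * (b i / b j) ^ t) t := by
      simpa [div_self hc.ne'] using
        hasDerivAt_sum_mul_rpow (fun i hi => div_pos (hb i hi) hc) t
    have hb' (i) (hi : i ∈ s) : 0 < b i / b j := div_pos (hb i (mem_cons_of_mem hi)) hc
    have hbinj' : Set.InjOn (fun i => b i / b j) s := fun i hi k hk h =>
      hbinj (mem_cons_of_mem hi) (mem_cons_of_mem hk) ((div_left_inj' hc.ne').mp h)
    have ha' (i) (hi : i ∈ s) : a i * log (b i / b j) ≠ 0 := by
      have hne : b i ≠ b j := fun h => hj (hbinj (mem_cons_of_mem hi) (mem_cons_self j s) h ▸ hi)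
      exact mul_ne_zero (ha i (mem_cons_of_mem hi))
        (log_ne_zero_of_pos_of_ne_one (hb' i hi) (div_ne_one_of_ne hne))
    have hlt := ih (a := fun i => a i * log (b i / b j)) hb' hbinj' ha'
    calc _ = _ := congrArg Set.encard hzeros
      _ ≤ _ := Real.encard_zeros_le_encard_zeros_deriv_add_one hderiv
      _ < s.card + 1 := (ENat.add_lt_add_iff_right ENat.one_ne_top).mpr hlt
      _ = (s.cons j hj).card := by simp

theorem stmt_0 (n : ℕ) (hn : 1 ≤ n) (a b : Fin n → ℝ)
    (hb : ∀ i, 0 < b i) (hbinj : Function.Injective b) (ha : ∀ i, a i ≠ 0) :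
    {lam : ℝ | ∑ i, a i * (b i) ^ lam = 0}.Finite ∧
    {lam : ℝ | ∑ i, a i * (b i) ^ lam = 0}.ncard ≤ n - 1 := by
  have : Nonempty (Fin n) := ⟨⟨0, hn⟩⟩
  have hlt : {lam : ℝ | ∑ i, a i * (b i) ^ lam = 0}.encard < n := by
    simpa using encard_zeros_sum_mul_rpow_lt_card univ_nonempty (fun i _ => hb i)
      hbinj.injOn (fun i _ => ha i)
  have hfin := Set.encard_lt_top_iff.mp (hlt.trans (ENat.natCast_lt_top n))
  refine ⟨hfin, ?_⟩
  rw [← hfin.cast_ncard_eq] at hlt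
  norm_cast at hlt
  omega
end

section
/- Let $\xi = e^{2\pi i/n}$ be a primitive $n$-th root of unity and let $k$ be an integer with $1 \le k \le n-1$. Then for any two complex numbers $x, y$ with $|x| = |y| = R$ for some fixed $R > 0$, we have $\sum_{i=1}^n |x - \xi^i|^{2k} = \sum_{i=1}^n |y - \xi^i|^{2k}$. -/
/-!
For `‖w‖ = 1` we have `‖x - w‖² = (‖x‖² + 1) - x̄ w - x w⁻¹`, so `‖x - w‖^(2k)` is a Laurent
polynomial in `w` with exponents in `[-k, k]`. Summing over the `n`-th roots of unity kills every
monomial `w^m` with `0 < |m| < n`; as `k < n`, only the constant term survives, and it is a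
polynomial in `x̄ x = ‖x‖²`.
-/

open Finset ComplexConjugate

theorem sum_range_pow_succ_eq_zero {K : Type*} [Field K] {z : K} {n : ℕ} (hz : z ^ n = 1)
    (hz1 : z ≠ 1) : ∑ j ∈ range n, z ^ (j + 1) = 0 := by
  simp_rw [pow_succ, ← sum_mul, geom_sum_eq hz1, hz, sub_self, zero_div, zero_mul]

theorem IsPrimitiveRoot.sum_pow_mul_inv_pow {K : Type*} [Field K] {ξ : K} {n : ℕ}
    (hξ : IsPrimitiveRoot ξ n) {c d : ℕ} (hc : c < n) (hd : d < n) :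
    ∑ j ∈ range n, (ξ ^ (j + 1)) ^ c * ((ξ ^ (j + 1))⁻¹) ^ d = if c = d then (n : K) else 0 := by
  have hξ0 : ξ ≠ 0 := hξ.ne_zero (by omega)
  have hterm (j : ℕ) :
      (ξ ^ (j + 1)) ^ c * ((ξ ^ (j + 1))⁻¹) ^ d = (ξ ^ ((c : ℤ) - d)) ^ (j + 1) := by
    rw [zpow_sub₀ hξ0, zpow_natCast, zpow_natCast, div_pow, inv_pow, pow_right_comm,
      pow_right_comm ξ d, div_eq_mul_inv]
  simp_rw [hterm]
  split_ifs with hcd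
  · simp [hcd]
  · refine sum_range_pow_succ_eq_zero ?_ ?_
    · rw [← zpow_natCast, ← zpow_mul, mul_comm, zpow_mul, zpow_natCast, hξ.pow_eq_one, one_zpow]
    · rw [Ne, hξ.zpow_eq_one_iff_dvd]
      intro hdvd
      have := Int.eq_zero_of_abs_lt_dvd hdvd (by rw [abs_lt]; omega)
      omega

theorem IsPrimitiveRoot.sum_pow_mul_add_mul_inv_add {K : Type*} [Field K] {ξ : K} {n k : ℕ}
    (hξ : IsPrimitiveRoot ξ n) (hk : k < n) (a b A : K) :
    ∑ j ∈ range n, (a * ξ ^ (j + 1) + (b * (ξ ^ (j + 1))⁻¹ + A)) ^ k =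
      n * ∑ c ∈ range (k + 1), k.choose c * (k - c).choose c * (a * b) ^ c * A ^ (k - c - c) := by
  set coeff : ℕ → ℕ → K := fun c d =>
    k.choose c * (k - c).choose d * a ^ c * b ^ d * A ^ (k - c - d)
  calc ∑ j ∈ range n, (a * ξ ^ (j + 1) + (b * (ξ ^ (j + 1))⁻¹ + A)) ^ k
      = ∑ j ∈ range n, ∑ c ∈ range (k + 1), ∑ d ∈ range (k - c + 1),
          coeff c d * ((ξ ^ (j + 1)) ^ c * ((ξ ^ (j + 1))⁻¹) ^ d) := by
        refine sum_congr rfl fun j _ => ?_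
        rw [add_pow]
        refine sum_congr rfl fun c _ => ?_
        rw [add_pow, mul_sum, sum_mul]
        refine sum_congr rfl fun d _ => ?_
        simp only [coeff, mul_pow]
        ring
    _ = ∑ c ∈ range (k + 1), ∑ d ∈ range (k - c + 1),
          coeff c d * ∑ j ∈ range n, (ξ ^ (j + 1)) ^ c * ((ξ ^ (j + 1))⁻¹) ^ d := by
        rw [sum_comm]
        refine sum_congr rfl fun c _ => ?_
        rw [sum_comm]
        simp_rw [mul_sum]
    _ = ∑ c ∈ range (k + 1), ∑ d ∈ range (k - c + 1), coeff c d * if c = d then (n : K) else 0 := by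
        refine sum_congr rfl fun c hc => sum_congr rfl fun d hd => ?_
        rw [mem_range] at hc hd
        rw [hξ.sum_pow_mul_inv_pow (by omega) (by omega)]
    _ = _ := by
        simp_rw [mul_ite, mul_zero, sum_ite_eq, mul_sum]
        refine sum_congr rfl fun c _ => ?_
        split_ifs with h
        · simp only [coeff]; ring
        · rw [mem_range, not_lt] at h
          simp [Nat.choose_eq_zero_of_lt (show k - c < c by omega)]

theorem Complex.norm_sub_sq_of_norm_eq_one {w : ℂ} (hw : ‖w‖ = 1) (x : ℂ) :
    (‖x - w‖ : ℂ) ^ 2 = -conj x * w + (-x * w⁻¹ + ((‖x‖ : ℂ) ^ 2 + 1)) := by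
  have hww : w * conj w = 1 := by rw [Complex.mul_conj', hw]; simp
  rw [Complex.inv_eq_conj hw, ← Complex.mul_conj', ← Complex.mul_conj', map_sub]
  linear_combination hww

theorem IsPrimitiveRoot.sum_norm_sub_pow {ξ : ℂ} {n k : ℕ} (hξ : IsPrimitiveRoot ξ n) (hk : k < n)
    (x : ℂ) :
    ((∑ j ∈ range n, ‖x - ξ ^ (j + 1)‖ ^ (2 * k) : ℝ) : ℂ) =
      n * ∑ c ∈ range (k + 1), k.choose c * (k - c).choose c * ((‖x‖ : ℂ) ^ 2) ^ c *
        ((‖x‖ : ℂ) ^ 2 + 1) ^ (k - c - c) := by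
  have hnorm (j : ℕ) : ‖ξ ^ (j + 1)‖ = 1 := by
    rw [norm_pow, hξ.norm'_eq_one (by omega), one_pow]
  push_cast
  simp_rw [pow_mul, Complex.norm_sub_sq_of_norm_eq_one (hnorm _),
    hξ.sum_pow_mul_add_mul_inv_add hk, neg_mul_neg, mul_comm (conj x), Complex.mul_conj']

theorem stmt_1_general (n : ℕ) (hn : 0 < n) (k : ℕ) (hk2 : k ≤ n - 1)
    (R : ℝ) (x y : ℂ)
    (hx : ‖x‖ = R) (hy : ‖y‖ = R) :
    ∑ i ∈ Finset.range n,
        ‖x - Complex.exp (2 * Real.pi * Complex.I / n) ^ (i + 1)‖ ^ (2 * k) =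
    ∑ i ∈ Finset.range n,
        ‖y - Complex.exp (2 * Real.pi * Complex.I / n) ^ (i + 1)‖ ^ (2 * k) := by
  have hξ := Complex.isPrimitiveRoot_exp n hn.ne'
  have hk : k < n := by omega
  apply Complex.ofReal_injective
  rw [hξ.sum_norm_sub_pow hk, hξ.sum_norm_sub_pow hk, hx, hy]

theorem stmt_1 (n : ℕ) (hn : 0 < n) (k : ℕ) (hk1 : 1 ≤ k) (hk2 : k ≤ n - 1)
    (R : ℝ) (hR : 0 < R) (x y : ℂ)
    (hx : ‖x‖ = R) (hy : ‖y‖ = R) :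
    ∑ i ∈ Finset.range n,
        ‖x - Complex.exp (2 * Real.pi * Complex.I / n) ^ (i + 1)‖ ^ (2 * k) =
    ∑ i ∈ Finset.range n,
        ‖y - Complex.exp (2 * Real.pi * Complex.I / n) ^ (i + 1)‖ ^ (2 * k) :=
  stmt_1_general n hn k hk2 R x y hx hy
end

section
/- Let $\xi = e^{2\pi i/n}$ and $1 \le k \le n-1$. Then for all $x \in \mathbb{C}$ with $|x| = R$, $\sum_{i=1}^n |x-\xi^i|^{2k} = n \sum_{j=0}^{k} \binom{k}{j}^2 R^{2j}$. -/
/-!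
Write `(x - ω) ^ k = ∑ₐ cₐ ωᵃ` with `cₐ = (-1)ᵃ (k choose a) x^(k-a)`. Since `k < n`, the exponents
`0, …, k` are distinct modulo `n`, so the characters `ω ↦ ωᵃ` are orthogonal on the `n`-th roots of
unity, and the discrete Parseval identity gives `∑_ω |x - ω|^(2k) = n ∑ₐ |cₐ|² = n ∑ₐ (k choose a)² R^(2(k-a))`.
-/

open Finset ComplexConjugate

theorem Finset.sum_range_pow_succ_eq_sum_range_pow {M β : Type*} [Monoid M] [AddCommMonoid β]
    {ζ : M} {n : ℕ} (hζ : ζ ^ n = 1) (f : M → β) :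
    ∑ i ∈ range n, f (ζ ^ (i + 1)) = ∑ i ∈ range n, f (ζ ^ i) := by
  cases n with
  | zero => simp
  | succ n => rw [sum_range_succ, sum_range_succ' (fun i => f (ζ ^ i)), hζ, pow_zero]

theorem IsPrimitiveRoot.sum_range_pow_div_pow_pow {K : Type*} [Field K] {ζ : K} {n a b : ℕ}
    (hζ : IsPrimitiveRoot ζ n) (ha : a < n) (hb : b < n) :
    ∑ i ∈ range n, (ζ ^ a / ζ ^ b) ^ i = if a = b then (n : K) else 0 := by
  have hζ0 : ζ ≠ 0 := hζ.ne_zero (by omega)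
  split_ifs with hab
  · simp [hab, pow_ne_zero b hζ0]
  · have hne : ζ ^ a / ζ ^ b ≠ 1 := div_ne_one_of_ne fun h => hab (hζ.pow_inj ha hb h)
    rw [geom_sum_eq hne, div_pow, ← pow_mul, ← pow_mul, pow_mul', pow_mul' ζ b, hζ.pow_eq_one]
    simp

/-- Discrete Parseval identity for the `n`-th roots of unity. -/
theorem IsPrimitiveRoot.sum_norm_sq_sum_pow {ζ : ℂ} {n m : ℕ} (hζ : IsPrimitiveRoot ζ n)
    (hm : m ≤ n) (c : ℕ → ℂ) :
    ∑ i ∈ range n, ‖∑ a ∈ range m, c a * (ζ ^ i) ^ a‖ ^ 2 = n * ∑ a ∈ range m, ‖c a‖ ^ 2 := by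
  obtain rfl | hn := eq_or_ne n 0
  · simp
  have hconj : conj ζ = ζ⁻¹ := (RCLike.inv_eq_conj (hζ.norm'_eq_one hn)).symm
  have hterm : ∀ i a b, (c a * (ζ ^ i) ^ a) * conj (c b * (ζ ^ i) ^ b)
      = c a * conj (c b) * (ζ ^ a / ζ ^ b) ^ i := by
    intro i a b
    rw [map_mul, map_pow, map_pow, hconj]
    ring
  apply Complex.ofReal_injective
  push_cast
  calc ∑ i ∈ range n, ((‖∑ a ∈ range m, c a * (ζ ^ i) ^ a‖ : ℂ)) ^ 2
      = ∑ a ∈ range m, ∑ b ∈ range m, c a * conj (c b) * ∑ i ∈ range n, (ζ ^ a / ζ ^ b) ^ i := by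
        simp only [← Complex.mul_conj', map_sum, sum_mul_sum, hterm]
        simp only [mul_sum]
        rw [sum_comm]
        exact sum_congr rfl fun a _ => sum_comm
    _ = ∑ a ∈ range m, c a * conj (c a) * n := by
        refine sum_congr rfl fun a ha => ?_
        rw [mem_range] at ha
        rw [sum_eq_single_of_mem a (mem_range.2 ha)]
        · rw [hζ.sum_range_pow_div_pow_pow (ha.trans_le hm) (ha.trans_le hm), if_pos rfl]
        · intro b hb hba
          rw [hζ.sum_range_pow_div_pow_pow (ha.trans_le hm) ((mem_range.1 hb).trans_le hm),
            if_neg hba.symm, mul_zero]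
    _ = n * ∑ a ∈ range m, ((‖c a‖ : ℂ)) ^ 2 := by
        simp only [Complex.mul_conj', mul_sum]
        exact sum_congr rfl fun a _ => mul_comm _ _

theorem Complex.norm_sub_pow_two_mul_eq (x w : ℂ) (k : ℕ) :
    ‖x - w‖ ^ (2 * k) =
      ‖∑ a ∈ range (k + 1), ((-1) ^ a * k.choose a * x ^ (k - a)) * w ^ a‖ ^ 2 := by
  rw [mul_comm, pow_mul, ← norm_pow, sub_eq_neg_add, add_pow]
  congr 2
  refine sum_congr rfl fun a _ => ?_
  rw [neg_pow]
  ring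

theorem stmt_2_general (n : ℕ) (hn : 0 < n) (k : ℕ) (hk2 : k ≤ n - 1)
    (R : ℝ) (x : ℂ) (hx : ‖x‖ = R) :
    ∑ i ∈ Finset.range n,
        ‖x - Complex.exp (2 * Real.pi * Complex.I / n) ^ (i + 1)‖ ^ (2 * k) =
    n * ∑ j ∈ Finset.range (k + 1), (Nat.choose k j : ℝ) ^ 2 * R ^ (2 * j) := by
  have hζ := Complex.isPrimitiveRoot_exp n hn.ne'
  rw [sum_range_pow_succ_eq_sum_range_pow hζ.pow_eq_one (fun w => ‖x - w‖ ^ (2 * k))]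
  simp only [Complex.norm_sub_pow_two_mul_eq]
  rw [hζ.sum_norm_sq_sum_pow (by omega), ← sum_range_reflect]
  congr 1
  refine sum_congr rfl fun a ha => ?_
  rw [mem_range] at ha
  rw [add_tsub_cancel_right, Nat.choose_symm (by omega), norm_mul, norm_mul, norm_pow, norm_pow,
    norm_neg, norm_one, one_pow, one_mul, Complex.norm_natCast, hx, Nat.sub_sub_self (by omega)]
  ring

theorem stmt_2 (n : ℕ) (hn : 0 < n) (k : ℕ) (hk1 : 1 ≤ k) (hk2 : k ≤ n - 1)
    (R : ℝ) (hR : 0 < R) (x : ℂ) (hx : ‖x‖ = R) :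
    ∑ i ∈ Finset.range n,
        ‖x - Complex.exp (2 * Real.pi * Complex.I / n) ^ (i + 1)‖ ^ (2 * k) =
    n * ∑ j ∈ Finset.range (k + 1), (Nat.choose k j : ℝ) ^ 2 * R ^ (2 * j) :=
  stmt_2_general n hn k hk2 R x hx
end

section
/- Let $A$, $B$, $C$ be points on the unit circle and $\lambda < 0$ a real number. Then there exists a point $M$ on the unit circle, distinct from $A$, $B$, $C$, such that $MA^{\lambda} + MB^{\lambda} + MC^{\lambda} \le 2 + 2^{\lambda}$. -/
/- Write the points as `e^{ia}, e^{ib}, e^{ic}` and let `M` be the midpoint of the largest of the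
three arcs they cut out, of length `2α ≥ 2π/3`. Then `M` is at distance at least `1` from each
point, and the product of the three distances is at least `2` (equality for the equilateral
triangle). For `λ ≤ 0` the numbers `MA^λ, MB^λ, MC^λ` lie in `[0, 1]` with product at most `2^λ`,
and `x + y + z ≤ 2 + xyz` on `[0, 1]`. -/

open Real

-- `2 + abc - a - b - c = (1 - a)(1 - b) + (1 - c)(1 - ab)`
theorem add_add_le_two_add_mul_mul {a b c : ℝ} (hb₀ : 0 ≤ b) (ha : a ≤ 1)
    (hb : b ≤ 1) (hc : c ≤ 1) : a + b + c ≤ 2 + a * b * c := by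
  nlinarith [mul_nonneg (sub_nonneg.2 ha) (sub_nonneg.2 hb),
    mul_nonneg (sub_nonneg.2 hc) (sub_nonneg.2 (mul_le_one₀ ha hb₀ hb))]

theorem rpow_add_rpow_add_rpow_le {p x y z : ℝ} (hp : p ≤ 0) (hx : 1 ≤ x) (hy : 1 ≤ y)
    (hz : 1 ≤ z) (hxyz : 2 ≤ x * y * z) : x ^ p + y ^ p + z ^ p ≤ 2 + 2 ^ p :=
  calc x ^ p + y ^ p + z ^ p ≤ 2 + x ^ p * y ^ p * z ^ p :=
        add_add_le_two_add_mul_mul (by positivity)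
          (rpow_le_one_of_one_le_of_nonpos hx hp) (rpow_le_one_of_one_le_of_nonpos hy hp)
          (rpow_le_one_of_one_le_of_nonpos hz hp)
    _ = 2 + (x * y * z) ^ p := by
        rw [mul_rpow (by positivity) (by positivity), mul_rpow (by positivity) (by positivity)]
    _ ≤ 2 + 2 ^ p := by grw [rpow_le_rpow_of_nonpos two_pos hxyz hp]

structure IsFarPoint {X : Type*} [Dist X] (M A B C : X) : Prop where
  one_le_dist_left : 1 ≤ dist M A
  one_le_dist_middle : 1 ≤ dist M B
  one_le_dist_right : 1 ≤ dist M C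
  two_le_mul_dist : 2 ≤ dist M A * dist M B * dist M C

namespace IsFarPoint

variable {X : Type*}

theorem swap [Dist X] {M A B C : X} (h : IsFarPoint M A B C) : IsFarPoint M A C B :=
  ⟨h.1, h.3, h.2, by linarith [h.4, mul_right_comm (dist M A) (dist M B) (dist M C)]⟩

theorem rotate [Dist X] {M A B C : X} (h : IsFarPoint M A B C) : IsFarPoint M B C A :=
  ⟨h.2, h.3, h.1, by linarith [h.4, mul_rotate (dist M A) (dist M B) (dist M C)]⟩

section PseudoMetricSpace

variable [PseudoMetricSpace X] {M A B C : X}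

theorem map {Y : Type*} [PseudoMetricSpace Y] {f : X → Y}
    (hf : Isometry f) (h : IsFarPoint M A B C) :
    IsFarPoint (f M) (f A) (f B) (f C) := by
  have hd := hf.dist_eq M
  exact ⟨by rw [hd]; exact h.1, by rw [hd]; exact h.2, by rw [hd]; exact h.3,
    by simpa only [hd] using h.4⟩

theorem ne_left (h : IsFarPoint M A B C) : M ≠ A :=
  fun hMA ↦ absurd h.one_le_dist_left (by rw [hMA, dist_self]; norm_num)

theorem ne_middle (h : IsFarPoint M A B C) : M ≠ B := h.rotate.ne_left

theorem ne_right (h : IsFarPoint M A B C) : M ≠ C := h.rotate.rotate.ne_left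

theorem rpow_dist_add_le (h : IsFarPoint M A B C) {p : ℝ} (hp : p ≤ 0) :
    dist M A ^ p + dist M B ^ p + dist M C ^ p ≤ 2 + 2 ^ p :=
  rpow_add_rpow_add_rpow_le hp h.1 h.2 h.3 h.4

end PseudoMetricSpace

end IsFarPoint

/- `2α` is the largest of the three arcs cut out by the points, `M` is its midpoint, and the third
point lies at angle `π + s` from `M`; the bound `|s| ≤ 3α - π` says that the other two arcs have
length at most `2α`. -/
theorem cos_bounds_of_largest_arc {α s : ℝ}
    (hα : π / 3 ≤ α) (hαπ : α ≤ π) (hs : |s| ≤ π - α) (hs' : |s| ≤ 3 * α - π) :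
    cos α ≤ 1 / 2 ∧ -(1 / 2) ≤ cos s ∧ 1 / 2 ≤ (1 - cos α) ^ 2 * (1 + cos s) := by
  have hcα : cos α ≤ 1 / 2 := by
    simpa only [cos_pi_div_three] using cos_le_cos_of_nonneg_of_le_pi (by positivity) hαπ hα
  have hcs : -cos α ≤ cos s := by
    rw [← cos_abs s, ← cos_pi_sub]
    exact cos_le_cos_of_nonneg_of_le_pi (abs_nonneg s) (by linarith) hs
  refine ⟨hcα, by linarith, ?_⟩
  rcases le_total α (π / 2) with hα₂ | hα₂
  · have hc₀ : 0 ≤ cos α := cos_nonneg_of_neg_pi_div_two_le_of_le (by linarith) hα₂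
    have hcs₃ : -cos (3 * α) ≤ cos s := by
      rw [← cos_abs s, ← cos_sub_pi]
      exact cos_le_cos_of_nonneg_of_le_pi (abs_nonneg s) (by linarith) hs'
    rw [cos_three_mul] at hcs₃
    -- with `t = cos α` this is `(1 - t) ^ 3 * (1 + 2 * t) ^ 2 ≥ 1 / 2` for `0 ≤ t ≤ 1 / 2`
    nlinarith [mul_nonneg hc₀ (sub_nonneg.2 hcα),
      mul_nonneg (mul_nonneg hc₀ hc₀) (sub_nonneg.2 hcα),
      mul_nonneg (sq_nonneg (1 - 2 * cos α)) hc₀, sq_nonneg (1 - cos α)]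
  · have hc₀ : cos α ≤ 0 := cos_nonpos_of_pi_div_two_le_of_le hα₂ (by linarith)
    nlinarith

theorem dist_circleExp_sq (s t : ℝ) :
    dist (Circle.exp s : ℂ) (Circle.exp t) ^ 2 = 2 - 2 * cos (s - t) := by
  rw [dist_eq_norm, Complex.sq_norm, Complex.normSq_apply, Circle.coe_exp, Circle.coe_exp]
  simp only [Complex.sub_re, Complex.sub_im, Complex.exp_ofReal_mul_I_re,
    Complex.exp_ofReal_mul_I_im]
  nlinarith [cos_sub s t, sin_sq_add_cos_sq s, sin_sq_add_cos_sq t]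

theorem isFarPoint_circleExp_of_cos {m a b c : ℝ} (ha : cos (m - a) ≤ 1 / 2)
    (hb : cos (m - b) ≤ 1 / 2) (hc : cos (m - c) ≤ 1 / 2)
    (habc : 1 / 2 ≤ (1 - cos (m - a)) * (1 - cos (m - b)) * (1 - cos (m - c))) :
    IsFarPoint (Circle.exp m : ℂ) (Circle.exp a) (Circle.exp b) (Circle.exp c) := by
  have one_le_dist {t : ℝ} (ht : cos (m - t) ≤ 1 / 2) :
      1 ≤ dist (Circle.exp m : ℂ) (Circle.exp t) :=
    le_of_pow_le_pow_left₀ two_ne_zero dist_nonneg (by rw [one_pow, dist_circleExp_sq]; linarith)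
  refine ⟨one_le_dist ha, one_le_dist hb, one_le_dist hc,
    le_of_pow_le_pow_left₀ two_ne_zero (by positivity) ?_⟩
  rw [mul_pow, mul_pow, dist_circleExp_sq, dist_circleExp_sq, dist_circleExp_sq]
  linarith

theorem isFarPoint_midpoint_of_largest_arc {p q r : ℝ} (hpq : p ≤ q) (hqr : q ≤ r)
    (h₁ : q - p ≤ 2 * π - (r - p)) (h₂ : r - q ≤ 2 * π - (r - p)) :
    IsFarPoint (Circle.exp ((p + r) / 2 + π) : ℂ) (Circle.exp p) (Circle.exp q)
      (Circle.exp r) := by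
  obtain ⟨hα, hs, hprod⟩ := cos_bounds_of_largest_arc
    (α := π - (r - p) / 2) (s := (r - q - (q - p)) / 2) (by linarith) (by linarith)
    (abs_le.2 ⟨by linarith, by linarith⟩) (abs_le.2 ⟨by linarith, by linarith⟩)
  have hp : cos ((p + r) / 2 + π - p) = cos (π - (r - p) / 2) := by
    rw [show (p + r) / 2 + π - p = 2 * π - (π - (r - p) / 2) by ring, cos_two_pi_sub]
  have hq : cos ((p + r) / 2 + π - q) = -cos ((r - q - (q - p)) / 2) := by
    rw [show (p + r) / 2 + π - q = (r - q - (q - p)) / 2 + π by ring, cos_add_pi]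
  have hr : cos ((p + r) / 2 + π - r) = cos (π - (r - p) / 2) := by congr 1; ring
  refine isFarPoint_circleExp_of_cos (hp ▸ hα) (hq ▸ by linarith) (hr ▸ hα) ?_
  rw [hp, hq, hr]
  linarith

theorem exists_isFarPoint_of_le {a b c : ℝ} (hab : a ≤ b) (hbc : b ≤ c) (hca : c ≤ a + 2 * π) :
    ∃ m : ℝ, IsFarPoint (Circle.exp m : ℂ) (Circle.exp a) (Circle.exp b) (Circle.exp c) := by
  have of_first (h₂ : c - b ≤ b - a) (h₃ : a + 2 * π - c ≤ b - a) : ∃ m : ℝ,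
      IsFarPoint (Circle.exp m : ℂ) (Circle.exp a) (Circle.exp b) (Circle.exp c) := by
    have h := isFarPoint_midpoint_of_largest_arc (r := a + 2 * π) hbc hca
      (by linarith) (by linarith)
    rw [Circle.exp_add_two_pi] at h
    exact ⟨_, h.rotate.rotate⟩
  have of_second (h₁ : b - a ≤ c - b) (h₃ : a + 2 * π - c ≤ c - b) : ∃ m : ℝ,
      IsFarPoint (Circle.exp m : ℂ) (Circle.exp a) (Circle.exp b) (Circle.exp c) := by
    have h := isFarPoint_midpoint_of_largest_arc (q := a + 2 * π) (r := b + 2 * π) hca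
      (by linarith) (by linarith) (by linarith)
    rw [Circle.exp_add_two_pi, Circle.exp_add_two_pi] at h
    exact ⟨_, h.rotate⟩
  rcases le_total (a + 2 * π - c) (b - a) with h₃ | h₃
  · rcases le_total (c - b) (b - a) with h₂ | h₂
    · exact of_first h₂ h₃
    · exact of_second h₂ (by linarith)
  · rcases le_total (c - b) (a + 2 * π - c) with h₂ | h₂
    · exact ⟨_, isFarPoint_midpoint_of_largest_arc hab hbc (by linarith) (by linarith)⟩
    · exact of_second (by linarith) h₂

theorem circleExp_toIcoMod (a b : ℝ) : Circle.exp (toIcoMod two_pi_pos a b) = Circle.exp b := by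
  rw [← self_sub_toIcoDiv_zsmul, Circle.periodic_exp.sub_zsmul_eq]

theorem exists_isFarPoint (a b c : ℝ) :
    ∃ m : ℝ, IsFarPoint (Circle.exp m : ℂ) (Circle.exp a) (Circle.exp b) (Circle.exp c) := by
  rw [← circleExp_toIcoMod a b, ← circleExp_toIcoMod a c]
  obtain ⟨hab, hba⟩ := toIcoMod_mem_Ico two_pi_pos a b
  obtain ⟨hac, hca⟩ := toIcoMod_mem_Ico two_pi_pos a c
  rcases le_total (toIcoMod two_pi_pos a b) (toIcoMod two_pi_pos a c) with hbc | hcb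
  · exact exists_isFarPoint_of_le hab hbc hca.le
  · obtain ⟨m, hm⟩ := exists_isFarPoint_of_le hac hcb hba.le
    exact ⟨m, hm.swap⟩

theorem exists_orthonormalBasisOneI_repr_circleExp_eq {X : EuclideanSpace ℝ (Fin 2)}
    (hX : X ∈ Metric.sphere 0 1) :
    ∃ θ : ℝ, Complex.orthonormalBasisOneI.repr (Circle.exp θ) = X := by
  obtain ⟨θ, hθ⟩ := (Complex.norm_eq_one_iff (Complex.orthonormalBasisOneI.repr.symm X)).1
    (by rw [LinearIsometryEquiv.norm_map]; exact mem_sphere_zero_iff_norm.1 hX)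
  exact ⟨θ, by rw [Circle.coe_exp, hθ, LinearIsometryEquiv.apply_symm_apply]⟩

theorem stmt_3 (A B C : EuclideanSpace ℝ (Fin 2))
    (hA : A ∈ Metric.sphere (0 : EuclideanSpace ℝ (Fin 2)) 1)
    (hB : B ∈ Metric.sphere (0 : EuclideanSpace ℝ (Fin 2)) 1)
    (hC : C ∈ Metric.sphere (0 : EuclideanSpace ℝ (Fin 2)) 1)
    (lam : ℝ) (hlam : lam < 0) :
    ∃ M ∈ Metric.sphere (0 : EuclideanSpace ℝ (Fin 2)) 1,
      M ≠ A ∧ M ≠ B ∧ M ≠ C ∧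
      dist M A ^ lam + dist M B ^ lam + dist M C ^ lam ≤ 2 + (2 : ℝ) ^ lam := by
  obtain ⟨a, rfl⟩ := exists_orthonormalBasisOneI_repr_circleExp_eq hA
  obtain ⟨b, rfl⟩ := exists_orthonormalBasisOneI_repr_circleExp_eq hB
  obtain ⟨c, rfl⟩ := exists_orthonormalBasisOneI_repr_circleExp_eq hC
  obtain ⟨m, hm⟩ := exists_isFarPoint a b c
  have hM := hm.map Complex.orthonormalBasisOneI.repr.isometry
  exact ⟨_, by simp, hM.ne_left, hM.ne_middle, hM.ne_right, hM.rpow_dist_add_le hlam.le⟩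
end

section
/- Let $A$, $B$, $C$ be points on the unit circle and $\lambda \in [0,2]$. Then there exists a point $M$ on the unit circle such that $MA^{\lambda} + MB^{\lambda} + MC^{\lambda} \ge 2 + 2^{\lambda}$. -/
/-!
Put `A, B, C` at angles on the circle and let `M` be the midpoint of the largest of the three arcs
between consecutive points. Then `M` is at angle at least `π/3` from each point, i.e. `⟪M, P⟫ ≤ 1/2`,
and elementary trigonometry gives `⟪M, A + B + C⟫ ≤ 0`. Since `t ↦ t ^ (λ/2)` is concave,
`d ^ λ = (d²) ^ (λ/2)` lies above the chord of that function on `[1, 4]`, an affine function of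
`d² = 2 - 2⟪M, P⟫`; summing the three chord bounds and using `⟪M, A + B + C⟫ ≤ 0` gives `2 + 2 ^ λ`.
-/

open Real RealInnerProductSpace

theorem neg_half_le_cos {g : ℝ} (h₀ : 0 ≤ g) (h₁ : g ≤ 2 * π / 3) : -(1 / 2) ≤ cos g := by
  have : cos (π - g) ≤ cos (π / 3) :=
    cos_le_cos_of_nonneg_of_le_pi (by positivity) (by linarith) (by linarith)
  rw [cos_pi_sub, cos_pi_div_three] at this
  linarith

theorem cos_le_cos_of_abs_le {g x : ℝ} (hxg : |x| ≤ g) (hg : g ≤ π) : cos g ≤ cos x := by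
  rw [← cos_abs x]
  exact cos_le_cos_of_nonneg_of_le_pi (abs_nonneg x) hg hxg

theorem cos_add_two_mul_cos_nonneg {g x : ℝ} (hxg : |x| ≤ g) (hx : |x| ≤ 2 * π - 3 * g) :
    0 ≤ cos x + 2 * cos g := by
  have hg₀ : 0 ≤ g := (abs_nonneg x).trans hxg
  rcases le_total g (π / 2) with hg | hg
  · have hcosg : 0 ≤ cos g := cos_nonneg_of_mem_Icc ⟨by linarith, hg⟩
    linarith [cos_le_cos_of_abs_le hxg (by linarith [pi_pos])]
  · have hcosg : cos g ≤ 0 := cos_nonpos_of_pi_div_two_le_of_le hg (by linarith [abs_nonneg x])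
    have hcosg' : -(1 / 2) ≤ cos g := neg_half_le_cos hg₀ (by linarith [abs_nonneg x])
    -- `cos x ≥ cos 3g = 4c³ - 3c` with `c = cos g`, and `4c³ - c = c (2c - 1) (2c + 1) ≥ 0`
    have h3 := cos_le_cos_of_abs_le hx (by linarith)
    rw [cos_two_pi_sub, cos_three_mul] at h3
    nlinarith [mul_nonneg (neg_nonneg.2 hcosg)
      (mul_nonneg (by linarith : 0 ≤ 1 - 2 * cos g) (by linarith : 0 ≤ 1 + 2 * cos g))]

theorem chord_le_rpow {μ y : ℝ} (hμ₀ : 0 ≤ μ) (hμ₁ : μ ≤ 1) (hy₁ : 1 ≤ y) (hy₄ : y ≤ 4) :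
    (4 - y) / 3 + (y - 1) / 3 * 4 ^ μ ≤ y ^ μ := by
  have h := (concaveOn_rpow hμ₀ hμ₁).2 (Set.mem_Ici.2 zero_le_one) (Set.mem_Ici.2 zero_le_four)
    (by linarith : 0 ≤ (4 - y) / 3) (by linarith : 0 ≤ (y - 1) / 3) (by ring)
  simp only [smul_eq_mul, one_rpow, mul_one] at h
  rwa [show (4 - y) / 3 + (y - 1) / 3 * 4 = y by ring] at h

section InnerProductSpace

variable {E : Type*} [NormedAddCommGroup E] [InnerProductSpace ℝ E]

theorem dist_sq_eq_of_norm_eq_one {M P : E} (hM : ‖M‖ = 1) (hP : ‖P‖ = 1) :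
    dist M P ^ 2 = 2 - 2 * ⟪M, P⟫ := by
  rw [dist_eq_norm, norm_sub_sq_real, hM, hP]
  ring

theorem chord_le_dist_rpow {M P : E} (hM : ‖M‖ = 1) (hP : ‖P‖ = 1) (hMP : ⟪M, P⟫ ≤ 1 / 2)
    {lam : ℝ} (hlam₀ : 0 ≤ lam) (hlam₂ : lam ≤ 2) :
    (2 + 2 * ⟪M, P⟫) / 3 + (1 - 2 * ⟪M, P⟫) / 3 * 2 ^ lam ≤ dist M P ^ lam := by
  have hd := dist_sq_eq_of_norm_eq_one hM hP
  have hd₂ : dist M P ≤ 2 := by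
    simpa [hM, hP, one_add_one_eq_two] using dist_le_norm_add_norm M P
  have h := chord_le_rpow (μ := lam / 2) (y := dist M P ^ 2) (by linarith) (by linarith)
    (by linarith) (by nlinarith [dist_nonneg (x := M) (y := P)])
  have hsqrt4 : √(4 : ℝ) = 2 := by
    rw [show (4 : ℝ) = 2 ^ 2 by norm_num, sqrt_sq zero_le_two]
  rw [rpow_div_two_eq_sqrt lam zero_le_four, rpow_div_two_eq_sqrt lam (sq_nonneg _),
    sqrt_sq dist_nonneg, hsqrt4, hd] at h
  convert h using 2 <;> ring

def IsFarDirection (M A B C : E) : Prop :=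
  ⟪M, A⟫ ≤ 1 / 2 ∧ ⟪M, B⟫ ≤ 1 / 2 ∧ ⟪M, C⟫ ≤ 1 / 2 ∧ ⟪M, A + B + C⟫ ≤ 0

theorem IsFarDirection.rotate {M A B C : E} (h : IsFarDirection M A B C) :
    IsFarDirection M B C A := by
  obtain ⟨hA, hB, hC, hsum⟩ := h
  exact ⟨hB, hC, hA, by rwa [show B + C + A = A + B + C by abel]⟩

theorem IsFarDirection.swap {M A B C : E} (h : IsFarDirection M A B C) :
    IsFarDirection M A C B := by
  obtain ⟨hA, hB, hC, hsum⟩ := h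
  exact ⟨hA, hC, hB, by rwa [show A + C + B = A + B + C by abel]⟩

end InnerProductSpace

noncomputable def unitVec (θ : ℝ) : EuclideanSpace ℝ (Fin 2) := !₂[cos θ, sin θ]

theorem norm_unitVec (θ : ℝ) : ‖unitVec θ‖ = 1 := by
  simp [unitVec, EuclideanSpace.norm_eq, Fin.sum_univ_two]

theorem inner_unitVec (θ φ : ℝ) : ⟪unitVec θ, unitVec φ⟫ = cos (θ - φ) := by
  simp [unitVec, PiLp.inner_apply, cos_sub, Fin.sum_univ_two]
  ring

theorem unitVec_add_two_pi (θ : ℝ) : unitVec (θ + 2 * π) = unitVec θ := by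
  simp [unitVec]

theorem exists_eq_unitVec {A : EuclideanSpace ℝ (Fin 2)} (hA : ‖A‖ = 1) :
    ∃ a ∈ Set.Ioc (-π) π, A = unitVec a := by
  obtain ⟨z, rfl⟩ := Complex.orthonormalBasisOneI.repr.surjective A
  rw [LinearIsometryEquiv.norm_map] at hA
  refine ⟨z.arg, Complex.arg_mem_Ioc z, ?_⟩
  have hz : z ≠ 0 := norm_ne_zero_iff.1 (by simp [hA])
  ext i
  fin_cases i
  · simp [unitVec, Complex.cos_arg hz, hA]
  · simp [unitVec, Complex.sin_arg, hA]

theorem isFarDirection_of_largest_gap {a b c : ℝ} (hab : a ≤ b) (hbc : b ≤ c)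
    (h₁ : b - a ≤ a + 2 * π - c) (h₂ : c - b ≤ a + 2 * π - c) :
    IsFarDirection (unitVec (π + (a + c) / 2)) (unitVec a) (unitVec b) (unitVec c) := by
  -- `π + (a + c) / 2` is the midpoint of the arc from `c` to `a + 2π`, of half-length `π - g`
  set g := (c - a) / 2 with hg_def
  set x := (a + c) / 2 - b with hx_def
  have hxg : |x| ≤ g := abs_le.2 ⟨by linarith, by linarith⟩
  have hx : |x| ≤ 2 * π - 3 * g := abs_le.2 ⟨by linarith, by linarith⟩
  have hg : cos g ≤ cos x := cos_le_cos_of_abs_le hxg (by linarith [abs_nonneg x])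
  have hg' : -(1 / 2) ≤ cos g := neg_half_le_cos (by linarith) (by linarith [abs_nonneg x])
  have hsum := cos_add_two_mul_cos_nonneg hxg hx
  simp only [IsFarDirection, inner_add_right, inner_unitVec]
  rw [show π + (a + c) / 2 - a = g + π by ring, show π + (a + c) / 2 - b = x + π by ring,
    show π + (a + c) / 2 - c = -g + π by ring, cos_add_pi, cos_add_pi, cos_add_pi, cos_neg]
  refine ⟨?_, ?_, ?_, ?_⟩ <;> linarith

theorem exists_isFarDirection_of_le {a b c : ℝ} (hab : a ≤ b) (hbc : b ≤ c)
    (hca : c ≤ a + 2 * π) :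
    ∃ θ, IsFarDirection (unitVec θ) (unitVec a) (unitVec b) (unitVec c) := by
  rcases le_total (b - a) (c - b) with h | h
  · rcases le_total (c - b) (a + 2 * π - c) with h' | h'
    · exact ⟨_, isFarDirection_of_largest_gap hab hbc (by linarith) h'⟩
    · have := isFarDirection_of_largest_gap (a := c) (b := a + 2 * π) (c := b + 2 * π)
        hca (by linarith) (by linarith) (by linarith)
      rw [unitVec_add_two_pi, unitVec_add_two_pi] at this
      exact ⟨_, this.rotate⟩
  · rcases le_total (b - a) (a + 2 * π - c) with h' | h'
    · exact ⟨_, isFarDirection_of_largest_gap hab hbc h' (by linarith)⟩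
    · have := isFarDirection_of_largest_gap (a := b) (b := c) (c := a + 2 * π)
        hbc (by linarith) (by linarith) (by linarith)
      rw [unitVec_add_two_pi] at this
      exact ⟨_, this.rotate.rotate⟩

theorem exists_isFarDirection_unitVec {a b c : ℝ} (ha : a ∈ Set.Ioc (-π) π)
    (hb : b ∈ Set.Ioc (-π) π) (hc : c ∈ Set.Ioc (-π) π) :
    ∃ θ, IsFarDirection (unitVec θ) (unitVec a) (unitVec b) (unitVec c) := by
  wlog hab : a ≤ b generalizing a b c
  · obtain ⟨θ, h⟩ := this hb ha hc (le_of_not_ge hab)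
    exact ⟨θ, h.rotate.swap⟩
  wlog hac : a ≤ c generalizing a b c
  · obtain ⟨θ, h⟩ := this hc ha hb (le_of_not_ge hac) (by linarith)
    exact ⟨θ, h.rotate⟩
  wlog hbc : b ≤ c generalizing b c
  · obtain ⟨θ, h⟩ := this hc hb hac hab (le_of_not_ge hbc)
    exact ⟨θ, h.swap⟩
  exact exists_isFarDirection_of_le hab hbc (by linarith [ha.1, hc.2])

theorem exists_isFarDirection {A B C : EuclideanSpace ℝ (Fin 2)} (hA : ‖A‖ = 1) (hB : ‖B‖ = 1)
    (hC : ‖C‖ = 1) : ∃ M, ‖M‖ = 1 ∧ IsFarDirection M A B C := by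
  obtain ⟨a, ha, rfl⟩ := exists_eq_unitVec hA
  obtain ⟨b, hb, rfl⟩ := exists_eq_unitVec hB
  obtain ⟨c, hc, rfl⟩ := exists_eq_unitVec hC
  obtain ⟨θ, hθ⟩ := exists_isFarDirection_unitVec ha hb hc
  exact ⟨unitVec θ, norm_unitVec θ, hθ⟩

theorem stmt_4 (A B C : EuclideanSpace ℝ (Fin 2))
    (hA : A ∈ Metric.sphere (0 : EuclideanSpace ℝ (Fin 2)) 1)
    (hB : B ∈ Metric.sphere (0 : EuclideanSpace ℝ (Fin 2)) 1)
    (hC : C ∈ Metric.sphere (0 : EuclideanSpace ℝ (Fin 2)) 1)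
    (lam : ℝ) (hlam0 : 0 ≤ lam) (hlam2 : lam ≤ 2) :
    ∃ M ∈ Metric.sphere (0 : EuclideanSpace ℝ (Fin 2)) 1,
      2 + (2 : ℝ) ^ lam ≤ dist M A ^ lam + dist M B ^ lam + dist M C ^ lam := by
  rw [mem_sphere_zero_iff_norm] at hA hB hC
  obtain ⟨M, hM, hMA, hMB, hMC, hsum⟩ := exists_isFarDirection hA hB hC
  refine ⟨M, mem_sphere_zero_iff_norm.2 hM, ?_⟩
  have hA' := chord_le_dist_rpow hM hA hMA hlam0 hlam2
  have hB' := chord_le_dist_rpow hM hB hMB hlam0 hlam2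
  have hC' := chord_le_dist_rpow hM hC hMC hlam0 hlam2
  have h2 : 1 ≤ (2 : ℝ) ^ lam := one_le_rpow one_le_two hlam0
  rw [inner_add_right, inner_add_right] at hsum
  nlinarith [mul_nonneg (neg_nonneg.2 hsum) (sub_nonneg.2 h2)]
end

section
/- Let $A$, $B$, $C$ be points on the unit circle and $\lambda \in (2,4)$. Then there exists a point $M$ on the unit circle such that $MA^{\lambda} + MB^{\lambda} + MC^{\lambda} \ge 2 \cdot (\sqrt{3})^{\lambda}$. -/
/-!
Among three unit vectors `A, B, C`, some pair, say `A, B`, satisfies `⟪A, B⟫ ≥ -1/2`, because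
`0 ≤ ‖A + B + C‖² = 3 + 2 (⟪A, B⟫ + ⟪A, C⟫ + ⟪B, C⟫)`. The unit vector `M` opposite to `A + B`
then satisfies `MA² = MB² = 2 + ‖A + B‖ ≥ 3`, so the two terms `MA^λ` and `MB^λ` alone already
reach `2 (√3)^λ`.
-/

open Real

section UnitVectors

variable {E : Type*} [NormedAddCommGroup E] [InnerProductSpace ℝ E]

lemma norm_add_sq_of_norm_eq_one {X Y : E} (hX : ‖X‖ = 1) (hY : ‖Y‖ = 1) :
    ‖X + Y‖ ^ 2 = 2 + 2 * inner ℝ X Y := by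
  rw [norm_add_sq_real, hX, hY]; ring

lemma exists_pair_neg_half_le_inner {A B C : E} (hA : ‖A‖ = 1) (hB : ‖B‖ = 1) (hC : ‖C‖ = 1) :
    -(1 / 2) ≤ inner ℝ A B ∨ -(1 / 2) ≤ inner ℝ A C ∨ -(1 / 2) ≤ inner ℝ B C := by
  have hsum : ‖A + B + C‖ ^ 2 = 3 + 2 * (inner ℝ A B + inner ℝ A C + inner ℝ B C) := by
    rw [norm_add_sq_real, norm_add_sq_real, inner_add_left, hA, hB, hC]; ring
  by_contra! h
  nlinarith [sq_nonneg ‖A + B + C‖]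

lemma dist_neg_normalize_add_sq {X Y : E} (hX : ‖X‖ = 1) (hY : ‖Y‖ = 1) (hXY : X + Y ≠ 0) :
    dist (-(‖X + Y‖⁻¹ • (X + Y))) X ^ 2 = 2 + ‖X + Y‖ := by
  have hpos : 0 < ‖X + Y‖ := norm_pos_iff.mpr hXY
  have hinner : inner ℝ (X + Y) X = ‖X + Y‖ ^ 2 / 2 := by
    rw [norm_add_sq_of_norm_eq_one hX hY, inner_add_left, real_inner_self_eq_norm_sq, hX,
      real_inner_comm]
    ring
  rw [dist_comm, dist_eq_norm, sub_neg_eq_add, norm_add_sq_real, real_inner_smul_right,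
    real_inner_comm, hinner, norm_smul, norm_inv, norm_norm, inv_mul_cancel₀ hpos.ne', hX]
  field_simp
  ring

lemma exists_norm_eq_one_sqrt_three_le_dist {X Y : E} (hX : ‖X‖ = 1) (hY : ‖Y‖ = 1)
    (hXY : -(1 / 2) ≤ inner ℝ X Y) :
    ∃ M : E, ‖M‖ = 1 ∧ √3 ≤ dist M X ∧ √3 ≤ dist M Y := by
  have hone : 1 ≤ ‖X + Y‖ := by
    nlinarith [norm_add_sq_of_norm_eq_one hX hY, norm_nonneg (X + Y)]
  have hne : X + Y ≠ 0 := norm_pos_iff.mp (by linarith)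
  refine ⟨-(‖X + Y‖⁻¹ • (X + Y)), ?_, ?_, ?_⟩
  · rw [norm_neg, norm_smul, norm_inv, norm_norm, inv_mul_cancel₀ (norm_ne_zero_iff.mpr hne)]
  · have h := dist_neg_normalize_add_sq hX hY hne
    rw [← sqrt_sq dist_nonneg, h]
    exact sqrt_le_sqrt (by linarith)
  · have h := dist_neg_normalize_add_sq hY hX (by rwa [add_comm])
    rw [add_comm Y X] at h
    rw [← sqrt_sq dist_nonneg, h]
    exact sqrt_le_sqrt (by linarith)

lemma exists_mem_sphere_two_mul_le_add_add {f : ℝ → ℝ} (hf : MonotoneOn f (Set.Ici 0))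
    (hf0 : ∀ t, 0 ≤ t → 0 ≤ f t) {A B C : E} (hA : ‖A‖ = 1) (hB : ‖B‖ = 1) (hC : ‖C‖ = 1) :
    ∃ M ∈ Metric.sphere (0 : E) 1,
      2 * f √3 ≤ f (dist M A) + f (dist M B) + f (dist M C) := by
  have hfar {M X : E} (hX : √3 ≤ dist M X) : f √3 ≤ f (dist M X) :=
    hf (sqrt_nonneg 3) (sqrt_nonneg 3 |>.trans hX) hX
  have hnonneg (M X : E) : 0 ≤ f (dist M X) := hf0 _ dist_nonneg
  simp_rw [mem_sphere_zero_iff_norm]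
  rcases exists_pair_neg_half_le_inner hA hB hC with h | h | h
  · obtain ⟨M, hM, hMA, hMB⟩ := exists_norm_eq_one_sqrt_three_le_dist hA hB h
    exact ⟨M, hM, by linarith [hfar hMA, hfar hMB, hnonneg M C]⟩
  · obtain ⟨M, hM, hMA, hMC⟩ := exists_norm_eq_one_sqrt_three_le_dist hA hC h
    exact ⟨M, hM, by linarith [hfar hMA, hfar hMC, hnonneg M B]⟩
  · obtain ⟨M, hM, hMB, hMC⟩ := exists_norm_eq_one_sqrt_three_le_dist hB hC h
    exact ⟨M, hM, by linarith [hfar hMB, hfar hMC, hnonneg M A]⟩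

end UnitVectors

theorem stmt_5_general (A B C : EuclideanSpace ℝ (Fin 2))
    (hA : A ∈ Metric.sphere (0 : EuclideanSpace ℝ (Fin 2)) 1)
    (hB : B ∈ Metric.sphere (0 : EuclideanSpace ℝ (Fin 2)) 1)
    (hC : C ∈ Metric.sphere (0 : EuclideanSpace ℝ (Fin 2)) 1)
    (lam : ℝ) (hlam2 : 2 < lam) :
    ∃ M ∈ Metric.sphere (0 : EuclideanSpace ℝ (Fin 2)) 1,
      2 * Real.sqrt 3 ^ lam ≤ dist M A ^ lam + dist M B ^ lam + dist M C ^ lam := by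
  rw [mem_sphere_zero_iff_norm] at hA hB hC
  have hlam : 0 ≤ lam := by linarith
  exact exists_mem_sphere_two_mul_le_add_add (fun _ hs _ _ hst => rpow_le_rpow hs hst hlam)
    (fun _ ht => rpow_nonneg ht lam) hA hB hC

theorem stmt_5 (A B C : EuclideanSpace ℝ (Fin 2))
    (hA : A ∈ Metric.sphere (0 : EuclideanSpace ℝ (Fin 2)) 1)
    (hB : B ∈ Metric.sphere (0 : EuclideanSpace ℝ (Fin 2)) 1)
    (hC : C ∈ Metric.sphere (0 : EuclideanSpace ℝ (Fin 2)) 1)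
    (lam : ℝ) (hlam2 : 2 < lam) (hlam4 : lam < 4) :
    ∃ M ∈ Metric.sphere (0 : EuclideanSpace ℝ (Fin 2)) 1,
      2 * Real.sqrt 3 ^ lam ≤ dist M A ^ lam + dist M B ^ lam + dist M C ^ lam :=
  stmt_5_general A B C hA hB hC lam hlam2
end

section
/- Let $A$, $B$, $C$ be points on the unit circle and $\lambda \ge 4$. Then there exists a point $M$ on the unit circle such that $MA^{\lambda} + MB^{\lambda} + MC^{\lambda} \ge 2 + 2^{\lambda}$. -/
/-!
Reflecting `A`, `B`, `C` through the centre gives three candidate points `-A`, `-B`, `-C`.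
For unit vectors, `dist (-A) A = 2` and `dist (-A) B = ‖A + B‖`, so the three candidate sums
add up to `3 * 2 ^ λ + 2 * (‖A + B‖ ^ λ + ‖A + C‖ ^ λ + ‖B + C‖ ^ λ)`. Expanding inner products,
`‖A + B‖² + ‖A + C‖² + ‖B + C‖² = 3 + ‖A + B + C‖² ≥ 3`, and Bernoulli's inequality applied to
`(x²) ^ (λ / 2)` turns this into `‖A + B‖ ^ λ + ‖A + C‖ ^ λ + ‖B + C‖ ^ λ ≥ 3`; hence one of the
candidates has sum at least the average `2 + 2 ^ λ`.
-/

section InnerProductSpace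

variable {E : Type*} [NormedAddCommGroup E] [InnerProductSpace ℝ E]

theorem norm_add_sq_add_norm_add_sq_add_norm_add_sq (a b c : E) :
    ‖a + b‖ ^ 2 + ‖a + c‖ ^ 2 + ‖b + c‖ ^ 2 =
      ‖a‖ ^ 2 + ‖b‖ ^ 2 + ‖c‖ ^ 2 + ‖a + b + c‖ ^ 2 := by
  simp only [norm_add_sq_real, inner_add_left]
  ring

theorem three_le_norm_add_sq_add_norm_add_sq_add_norm_add_sq {a b c : E}
    (ha : ‖a‖ = 1) (hb : ‖b‖ = 1) (hc : ‖c‖ = 1) :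
    3 ≤ ‖a + b‖ ^ 2 + ‖a + c‖ ^ 2 + ‖b + c‖ ^ 2 := by
  rw [norm_add_sq_add_norm_add_sq_add_norm_add_sq, ha, hb, hc]
  nlinarith [sq_nonneg ‖a + b + c‖]

end InnerProductSpace

theorem dist_neg_left_eq_norm_add {E : Type*} [SeminormedAddCommGroup E] (a b : E) :
    dist (-a) b = ‖a + b‖ := by
  rw [dist_eq_norm, ← norm_neg, neg_sub, sub_neg_eq_add, add_comm]

theorem dist_neg_self {E : Type*} [SeminormedAddCommGroup E] [NormedSpace ℝ E] (a : E) :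
    dist (-a) a = 2 * ‖a‖ := by
  rw [dist_neg_left_eq_norm_add, ← two_smul ℝ a, norm_smul, Real.norm_two]

theorem one_add_mul_sq_sub_one_le_rpow {x p : ℝ} (hx : 0 ≤ x) (hp : 2 ≤ p) :
    1 + p / 2 * (x ^ 2 - 1) ≤ x ^ p := by
  have hbern := one_add_mul_self_le_rpow_one_add (s := x ^ 2 - 1) (by nlinarith) (p := p / 2)
    (by linarith)
  have hpow : (x ^ 2) ^ (p / 2) = x ^ p := by
    rw [← Real.rpow_natCast, ← Real.rpow_mul hx, Nat.cast_ofNat, mul_div_cancel₀ p two_ne_zero]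
  rwa [add_sub_cancel, hpow] at hbern

theorem three_le_rpow_add_rpow_add_rpow {x y z p : ℝ} (hx : 0 ≤ x) (hy : 0 ≤ y) (hz : 0 ≤ z)
    (hp : 2 ≤ p) (hsq : 3 ≤ x ^ 2 + y ^ 2 + z ^ 2) :
    3 ≤ x ^ p + y ^ p + z ^ p := by
  have hx' := one_add_mul_sq_sub_one_le_rpow hx hp
  have hy' := one_add_mul_sq_sub_one_le_rpow hy hp
  have hz' := one_add_mul_sq_sub_one_le_rpow hz hp
  nlinarith

theorem stmt_6 (A B C : EuclideanSpace ℝ (Fin 2))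
    (hA : A ∈ Metric.sphere (0 : EuclideanSpace ℝ (Fin 2)) 1)
    (hB : B ∈ Metric.sphere (0 : EuclideanSpace ℝ (Fin 2)) 1)
    (hC : C ∈ Metric.sphere (0 : EuclideanSpace ℝ (Fin 2)) 1)
    (lam : ℝ) (hlam : 4 ≤ lam) :
    ∃ M ∈ Metric.sphere (0 : EuclideanSpace ℝ (Fin 2)) 1,
      2 + (2 : ℝ) ^ lam ≤ dist M A ^ lam + dist M B ^ lam + dist M C ^ lam := by
  rw [mem_sphere_zero_iff_norm] at hA hB hC
  have hsum : 3 ≤ ‖A + B‖ ^ lam + ‖A + C‖ ^ lam + ‖B + C‖ ^ lam :=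
    three_le_rpow_add_rpow_add_rpow (norm_nonneg _) (norm_nonneg _) (norm_nonneg _)
      (by linarith) (three_le_norm_add_sq_add_norm_add_sq_add_norm_add_sq hA hB hC)
  by_contra! hlt
  have hMA := hlt (-A) (by simpa using hA)
  have hMB := hlt (-B) (by simpa using hB)
  have hMC := hlt (-C) (by simpa using hC)
  simp only [dist_neg_self, dist_neg_left_eq_norm_add, hA, hB, hC, mul_one] at hMA hMB hMC
  rw [add_comm B A] at hMB
  rw [add_comm C A, add_comm C B] at hMC
  linarith
end

section
/- Let $A$, $B$, $C$ be the vertices of an equilateral triangle inscribed in the unit circle and $\lambda > 4$. Then for every point $M$ on the unit circle, $MA^{\lambda} + MB^{\lambda} + MC^{\lambda} \le 2 + 2^{\lambda}$, with equality exactly when $M$ is the midpoint of one of the arcs between consecutive vertices. -/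
/-!
Write `u, v, w ∈ [0, 4]` for the squared distances from `M` to the vertices and `μ = λ / 2 > 2`.
Since `A + B + C = 0` and the three vertices form a tight frame of the plane, `u + v + w = 6` and
`u² + v² + w² = 18`. The quadratic `Q` with `Q 1 = 1`, `Q' 1 = μ`, `Q 4 = 4 ^ μ` satisfies
`s ^ μ ≤ Q s` on `[0, 4]`, with equality only at `1` and `4`. Summing, `u ^ μ + v ^ μ + w ^ μ`
is at most `Q u + Q v + Q w`, which depends only on the two power sums and equals `2 + 4 ^ μ`;
equality forces `{u, v, w} ⊆ {1, 4}`, i.e. one squared distance is `4` and `M` is antipodal to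
a vertex.
-/

open Real Set

open scoped RealInnerProductSpace

namespace StrictConcaveOn

variable {s : Set ℝ} {f : ℝ → ℝ} {p q x : ℝ}

lemma pos_of_mem_Ioo_of_eq_zero (hf : StrictConcaveOn ℝ s f) (hp : p ∈ s) (hq : q ∈ s)
    (hfp : f p = 0) (hfq : f q = 0) (hx : x ∈ Ioo p q) : 0 < f x := by
  have hpq := hx.1.trans hx.2
  simpa [hfp, hfq] using hf.lt_on_openSegment hp hq hpq.ne (by rwa [openSegment_eq_Ioo hpq])

lemma neg_of_lt_of_eq_zero (hf : StrictConcaveOn ℝ s f) (hx : x ∈ s) (hq : q ∈ s)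
    (hxp : x < p) (hpq : p < q) (hfp : f p = 0) (hfq : f q = 0) : f x < 0 := by
  have h := hf.lt_on_openSegment hx hq (hxp.trans hpq).ne
    (by rw [openSegment_eq_Ioo (hxp.trans hpq)]; exact ⟨hxp, hpq⟩)
  rw [hfp, hfq, min_lt_iff] at h
  exact h.resolve_right (lt_irrefl 0)

lemma neg_of_gt_of_eq_zero (hf : StrictConcaveOn ℝ s f) (hp : p ∈ s) (hx : x ∈ s)
    (hpq : p < q) (hqx : q < x) (hfp : f p = 0) (hfq : f q = 0) : f x < 0 := by
  have h := hf.lt_on_openSegment hp hx (hpq.trans hqx).ne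
    (by rw [openSegment_eq_Ioo (hpq.trans hqx)]; exact ⟨hpq, hqx⟩)
  rw [hfp, hfq, min_lt_iff] at h
  exact h.resolve_left (lt_irrefl 0)

end StrictConcaveOn

lemma strictConcaveOn_affine_sub_mul_rpow {μ : ℝ} (hμ : 2 < μ) (α β : ℝ) :
    StrictConcaveOn ℝ (Ici 0) fun s : ℝ ↦ α * s + β - μ * s ^ (μ - 1) := by
  refine ⟨convex_Ici 0, fun x hx y hy hxy r t hr ht hrt ↦ ?_⟩
  have h := (strictConvexOn_rpow (by linarith : (1 : ℝ) < μ - 1)).2 hx hy hxy hr ht hrt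
  simp only [smul_eq_mul] at h ⊢
  have hβ : β = r * β + t * β := by rw [← add_mul, hrt, one_mul]
  linarith [mul_lt_mul_of_pos_left h (by linarith : (0 : ℝ) < μ)]

lemma hasDerivAt_quadratic_sub_rpow {μ : ℝ} (hμ : 1 ≤ μ) (a b c x : ℝ) :
    HasDerivAt (fun x ↦ a * x ^ 2 + b * x + c - x ^ μ) (2 * a * x + b - μ * x ^ (μ - 1)) x := by
  refine (((((hasDerivAt_pow 2 x).const_mul a).add ((hasDerivAt_id' x).const_mul b)).add_const
    c).sub (hasDerivAt_rpow_const (Or.inr hμ))).congr_deriv ?_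
  ring

lemma rpow_lt_of_osculating_quadratic {μ r a b c s : ℝ} (hμ : 2 < μ) (hr : 1 < r)
    (h₁ : a + b + c = 1) (h₁' : 2 * a + b = μ) (hr' : a * r ^ 2 + b * r + c = r ^ μ)
    (hs : s ∈ Icc 0 r) (hs₁ : s ≠ 1) (hsr : s ≠ r) : s ^ μ < a * s ^ 2 + b * s + c := by
  set H : ℝ → ℝ := fun x ↦ a * x ^ 2 + b * x + c - x ^ μ
  set D : ℝ → ℝ := fun x ↦ 2 * a * x + b - μ * x ^ (μ - 1)
  have hH (x : ℝ) : HasDerivAt H (D x) x := hasDerivAt_quadratic_sub_rpow (by linarith) a b c x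
  -- `D` is strictly concave and vanishes at `1` and, by Rolle, at some `ξ ∈ (1, r)`; so `H`
  -- decreases on `[0, 1]`, increases on `[1, ξ]`, decreases on `[ξ, r]`, and `H 1 = H r = 0`.
  have hHc : Continuous H := continuous_iff_continuousAt.2 fun x ↦ (hH x).continuousAt
  have hH₁ : H 1 = 0 := by simp [H, h₁]
  have hHr : H r = 0 := by simp [H, hr']
  have hD₁ : D 1 = 0 := by simp [D, h₁']
  obtain ⟨ξ, ⟨hξ₁, hξr⟩, hDξ⟩ :=
    exists_hasDerivAt_eq_zero hr hHc.continuousOn (hH₁.trans hHr.symm) fun x _ ↦ hH x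
  have hD := strictConcaveOn_affine_sub_mul_rpow hμ (2 * a) b
  have h1 : (1 : ℝ) ∈ Ici 0 := mem_Ici.2 zero_le_one
  have hξ : ξ ∈ Ici 0 := mem_Ici.2 (by linarith)
  have anti₁ : StrictAntiOn H (Icc 0 1) := by
    refine strictAntiOn_of_hasDerivWithinAt_neg (convex_Icc 0 1) hHc.continuousOn
      (fun x _ ↦ (hH x).hasDerivWithinAt) fun x hx ↦ ?_
    rw [interior_Icc] at hx
    exact hD.neg_of_lt_of_eq_zero hx.1.le hξ hx.2 hξ₁ hD₁ hDξ
  have mono : StrictMonoOn H (Icc 1 ξ) := by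
    refine strictMonoOn_of_hasDerivWithinAt_pos (convex_Icc 1 ξ) hHc.continuousOn
      (fun x _ ↦ (hH x).hasDerivWithinAt) fun x hx ↦ ?_
    rw [interior_Icc] at hx
    exact hD.pos_of_mem_Ioo_of_eq_zero h1 hξ hD₁ hDξ hx
  have anti₂ : StrictAntiOn H (Icc ξ r) := by
    refine strictAntiOn_of_hasDerivWithinAt_neg (convex_Icc ξ r) hHc.continuousOn
      (fun x _ ↦ (hH x).hasDerivWithinAt) fun x hx ↦ ?_
    rw [interior_Icc] at hx
    exact hD.neg_of_gt_of_eq_zero h1 (hξ.trans hx.1.le) hξ₁ hx.1 hD₁ hDξ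
  suffices 0 < H s from sub_pos.1 this
  obtain ⟨hs0, hsr'⟩ := hs
  rcases hs₁.lt_or_gt with hs1 | hs1
  · simpa [hH₁] using anti₁ ⟨hs0, hs1.le⟩ ⟨zero_le_one, le_rfl⟩ hs1
  rcases le_or_gt s ξ with hsξ | hsξ
  · simpa [hH₁] using mono ⟨le_rfl, hξ₁.le⟩ ⟨hs1.le, hsξ⟩ hs1
  · simpa [hHr] using anti₂ ⟨hsξ.le, hsr'⟩ ⟨hξr.le, le_rfl⟩ (lt_of_le_of_ne hsr' hsr)

lemma eq_one_and_eq_one_of_add_eq_two {x y : ℝ} (h : x + y = 2) (h' : x ^ 2 + y ^ 2 = 2) :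
    x = 1 ∧ y = 1 := by
  have h0 : (x - 1) ^ 2 + (y - 1) ^ 2 = 0 := by linear_combination h' - 2 * h
  rw [add_eq_zero_iff_of_nonneg (sq_nonneg _) (sq_nonneg _)] at h0
  simpa [sub_eq_zero] using h0

lemma rpow_add_rpow_add_rpow_le_s8 {μ u v w : ℝ} (hμ : 2 < μ)
    (hu : u ∈ Icc 0 4) (hv : v ∈ Icc 0 4) (hw : w ∈ Icc 0 4)
    (hsum : u + v + w = 6) (hsq : u ^ 2 + v ^ 2 + w ^ 2 = 18) :
    u ^ μ + v ^ μ + w ^ μ ≤ 2 + 4 ^ μ ∧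
      (u ^ μ + v ^ μ + w ^ μ = 2 + 4 ^ μ ↔ u = 4 ∨ v = 4 ∨ w = 4) := by
  -- `a` is forced by `Q 1 = 1`, `Q' 1 = μ` and `Q 4 = 4 ^ μ`
  set a : ℝ := ((4 : ℝ) ^ μ - 1 - 3 * μ) / 9
  set Q : ℝ → ℝ := fun s ↦ a * s ^ 2 + (μ - 2 * a) * s + (1 - μ + a)
  have hQ₁ : Q 1 = 1 := by simp only [Q]; ring
  have hQ₄ : Q 4 = 4 ^ μ := by simp only [Q, a]; ring
  have hQ : ∀ s ∈ Icc (0 : ℝ) 4, s ^ μ ≤ Q s ∧ (s ^ μ = Q s → s = 1 ∨ s = 4) := by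
    intro s hs
    by_cases h₁ : s = 1
    · simp [h₁, hQ₁]
    by_cases h₄ : s = 4
    · simp [h₄, hQ₄]
    have h := rpow_lt_of_osculating_quadratic hμ (by norm_num) (by ring) (by ring) hQ₄ hs h₁ h₄
    exact ⟨h.le, fun h' ↦ absurd h' h.ne⟩
  have hQsum : Q u + Q v + Q w = 2 + 4 ^ μ := by
    simp only [Q, a]
    linear_combination a * hsq + (μ - 2 * a) * hsum
  have hu' := (hQ u hu).1
  have hv' := (hQ v hv).1
  have hw' := (hQ w hw).1
  refine ⟨by linarith, fun heq ↦ ?_, ?_⟩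
  · have eu := (hQ u hu).2 (by linarith)
    have ev := (hQ v hv).2 (by linarith)
    have ew := (hQ w hw).2 (by linarith)
    by_contra! h
    linarith [eu.resolve_right h.1, ev.resolve_right h.2.1, ew.resolve_right h.2.2]
  · rintro (rfl | rfl | rfl)
    · obtain ⟨rfl, rfl⟩ :=
        eq_one_and_eq_one_of_add_eq_two (x := v) (y := w) (by linarith) (by linarith)
      rw [one_rpow]; ring
    · obtain ⟨rfl, rfl⟩ :=
        eq_one_and_eq_one_of_add_eq_two (x := u) (y := w) (by linarith) (by linarith)
      rw [one_rpow]; ring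
    · obtain ⟨rfl, rfl⟩ :=
        eq_one_and_eq_one_of_add_eq_two (x := u) (y := v) (by linarith) (by linarith)
      rw [one_rpow]; ring

section InnerProductSpace

variable {E : Type*} [NormedAddCommGroup E] [InnerProductSpace ℝ E] {x y : E}

lemma dist_sq_eq_two_sub_two_inner (hx : ‖x‖ = 1) (hy : ‖y‖ = 1) :
    dist x y ^ 2 = 2 - 2 * ⟪x, y⟫ := by
  rw [dist_eq_norm, norm_sub_sq_real, hx, hy]
  ring

lemma dist_sq_mem_Icc (hx : ‖x‖ = 1) (hy : ‖y‖ = 1) : dist x y ^ 2 ∈ Icc (0 : ℝ) 4 := by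
  obtain ⟨h₁, h₂⟩ := real_inner_mem_Icc_of_norm_eq_one hx hy
  rw [dist_sq_eq_two_sub_two_inner hx hy]
  constructor <;> linarith

lemma dist_sq_eq_four_iff (hx : ‖x‖ = 1) (hy : ‖y‖ = 1) : dist x y ^ 2 = 4 ↔ x = -y := by
  rw [dist_sq_eq_two_sub_two_inner hx hy, ← inner_eq_neg_one_iff_of_norm_eq_one (𝕜 := ℝ) hx hy]
  constructor <;> intro h <;> linarith

lemma inner_eq_neg_half_of_dist_eq_sqrt_three (hx : ‖x‖ = 1) (hy : ‖y‖ = 1)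
    (h : dist x y = √3) : ⟪x, y⟫ = -1 / 2 := by
  have h' := dist_sq_eq_two_sub_two_inner hx hy
  rw [h, sq_sqrt zero_le_three] at h'
  linarith

lemma add_add_eq_zero_of_inner_eq_neg_half {A B C : E} (hA : ‖A‖ = 1) (hB : ‖B‖ = 1)
    (hC : ‖C‖ = 1) (hAB : ⟪A, B⟫ = -1 / 2) (hBC : ⟪B, C⟫ = -1 / 2) (hCA : ⟪C, A⟫ = -1 / 2) :
    A + B + C = 0 := by
  rw [← inner_self_eq_zero (𝕜 := ℝ)]
  simp only [inner_add_left, inner_add_right, real_inner_self_eq_norm_sq, hA, hB, hC, hAB, hBC,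
    hCA, real_inner_comm A B, real_inner_comm B C, real_inner_comm C A]
  norm_num

end InnerProductSpace

lemma gram_det_eq_zero (x y z : EuclideanSpace ℝ (Fin 2)) :
    ⟪x, x⟫ * (⟪y, y⟫ * ⟪z, z⟫ - ⟪y, z⟫ ^ 2) - ⟪x, y⟫ * (⟪x, y⟫ * ⟪z, z⟫ - ⟪y, z⟫ * ⟪x, z⟫)
      + ⟪x, z⟫ * (⟪x, y⟫ * ⟪y, z⟫ - ⟪y, y⟫ * ⟪x, z⟫) = 0 := by
  simp only [PiLp.inner_apply, RCLike.inner_apply, conj_trivial, Fin.sum_univ_two]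
  ring

lemma inner_sq_add_inner_sq_add_inner_mul_inner (M : EuclideanSpace ℝ (Fin 2))
    {A B : EuclideanSpace ℝ (Fin 2)} (hA : ‖A‖ = 1) (hB : ‖B‖ = 1) (hAB : ⟪A, B⟫ = -1 / 2) :
    ⟪M, A⟫ ^ 2 + ⟪M, B⟫ ^ 2 + ⟪M, A⟫ * ⟪M, B⟫ = 3 / 4 * ‖M‖ ^ 2 := by
  have h := gram_det_eq_zero M A B
  rw [real_inner_self_eq_norm_sq, real_inner_self_eq_norm_sq, real_inner_self_eq_norm_sq, hA, hB,
    hAB] at h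
  linear_combination -h

lemma dist_sq_sum_eq_six_and_sq_sum_eq_eighteen {A B C M : EuclideanSpace ℝ (Fin 2)}
    (hA : ‖A‖ = 1) (hB : ‖B‖ = 1) (hC : ‖C‖ = 1) (hAB : dist A B = √3) (hBC : dist B C = √3)
    (hCA : dist C A = √3) (hM : ‖M‖ = 1) :
    dist M A ^ 2 + dist M B ^ 2 + dist M C ^ 2 = 6 ∧
      (dist M A ^ 2) ^ 2 + (dist M B ^ 2) ^ 2 + (dist M C ^ 2) ^ 2 = 18 := by
  have iAB := inner_eq_neg_half_of_dist_eq_sqrt_three hA hB hAB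
  have hC' : C = -(A + B) := eq_neg_of_add_eq_zero_right <| add_add_eq_zero_of_inner_eq_neg_half
    hA hB hC iAB (inner_eq_neg_half_of_dist_eq_sqrt_three hB hC hBC)
    (inner_eq_neg_half_of_dist_eq_sqrt_three hC hA hCA)
  have hMC : ⟪M, C⟫ = -⟪M, A⟫ - ⟪M, B⟫ := by rw [hC', inner_neg_right, inner_add_right]; ring
  have key := inner_sq_add_inner_sq_add_inner_mul_inner M hA hB iAB
  rw [dist_sq_eq_two_sub_two_inner hM hA, dist_sq_eq_two_sub_two_inner hM hB,
    dist_sq_eq_two_sub_two_inner hM hC, hMC]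
  rw [hM] at key
  constructor
  · ring
  · linear_combination 8 * key

theorem stmt_8 (A B C : EuclideanSpace ℝ (Fin 2))
    (hA : A ∈ Metric.sphere (0 : EuclideanSpace ℝ (Fin 2)) 1)
    (hB : B ∈ Metric.sphere (0 : EuclideanSpace ℝ (Fin 2)) 1)
    (hC : C ∈ Metric.sphere (0 : EuclideanSpace ℝ (Fin 2)) 1)
    (hAB : dist A B = Real.sqrt 3) (hBC : dist B C = Real.sqrt 3)
    (hCA : dist C A = Real.sqrt 3)
    (lam : ℝ) (hlam : 4 < lam) :
    ∀ M ∈ Metric.sphere (0 : EuclideanSpace ℝ (Fin 2)) 1,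
      dist M A ^ lam + dist M B ^ lam + dist M C ^ lam ≤ 2 + (2 : ℝ) ^ lam ∧
      (dist M A ^ lam + dist M B ^ lam + dist M C ^ lam = 2 + (2 : ℝ) ^ lam ↔
        M = -A ∨ M = -B ∨ M = -C) := by
  intro M hM
  rw [mem_sphere_zero_iff_norm] at hA hB hC hM
  obtain ⟨hsum, hsq⟩ := dist_sq_sum_eq_six_and_sq_sum_eq_eighteen hA hB hC hAB hBC hCA hM
  have hpow (X : EuclideanSpace ℝ (Fin 2)) : dist M X ^ lam = (dist M X ^ 2) ^ (lam / 2) := by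
    rw [← rpow_natCast, ← rpow_mul dist_nonneg]
    ring_nf
  have h₂ : (2 : ℝ) ^ lam = 4 ^ (lam / 2) := by
    rw [show (4 : ℝ) = 2 ^ (2 : ℝ) by norm_num, ← rpow_mul zero_le_two]
    ring_nf
  rw [hpow, hpow, hpow, h₂, ← dist_sq_eq_four_iff hM hA, ← dist_sq_eq_four_iff hM hB,
    ← dist_sq_eq_four_iff hM hC]
  exact rpow_add_rpow_add_rpow_le_s8 (by linarith) (dist_sq_mem_Icc hM hA) (dist_sq_mem_Icc hM hB)
    (dist_sq_mem_Icc hM hC) hsum hsq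
end

section
/- Let $A$, $B$, $C$ be the vertices of an equilateral triangle inscribed in the unit circle and $\lambda < 0$. Then for every point $M$ on the unit circle distinct from $A$, $B$, $C$, $MA^{\lambda} + MB^{\lambda} + MC^{\lambda} \ge 2 + 2^{\lambda}$, with equality exactly when $M$ bisects one of the arcs between consecutive vertices. -/
/-!
Every point `M` of the circle lies on an arc `BC` cut off by two vertices, i.e. `⟪M, A⟫ ≤ -1/2` for
the third vertex `A`. There Ptolemy's theorem gives `MA = MB + MC`, and the law of cosines in the
triangle `MBC` (angle `120°` at `M`) gives `MB² + MB·MC + MC² = 3`. Hence `MA ≤ 2` and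
`MB·MC ≤ 1`, so `MA^λ ≥ 2^λ` and, by AM-GM, `MB^λ + MC^λ ≥ 2 (MB·MC)^(λ/2) ≥ 2`; equality forces
`MA = 2`, i.e. `M = -A`. Both planar relations come from the vanishing of the Gram determinant
of `M, B, C`.
-/

open Module Matrix RealInnerProductSpace

theorem Matrix.det_gram_eq_zero_of_finrank_lt {𝕜 E n : Type*} [RCLike 𝕜] [NormedAddCommGroup E]
    [InnerProductSpace 𝕜 E] [FiniteDimensional 𝕜 E] [Fintype n] [DecidableEq n] {v : n → E}
    (h : finrank 𝕜 E < Fintype.card n) : (gram 𝕜 v).det = 0 := by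
  by_contra hne
  exact h.not_ge (det_gram_ne_zero_iff_linearIndependent.mp hne).fintype_card_le_finrank

theorem Real.two_le_rpow_add_rpow {x y lam : ℝ} (hx : 0 < x) (hy : 0 < y) (hxy : x * y ≤ 1)
    (hlam : lam ≤ 0) : 2 ≤ x ^ lam + y ^ lam := by
  have hprod : 1 ≤ x ^ lam * y ^ lam := by
    rw [← mul_rpow hx.le hy.le]
    exact one_le_rpow_of_pos_of_le_one_of_nonpos (mul_pos hx hy) hxy hlam
  nlinarith [sq_nonneg (x ^ lam - y ^ lam), rpow_pos_of_pos hx lam, rpow_pos_of_pos hy lam]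

theorem Real.two_add_two_rpow_le_of_sq_add_mul_add_sq_eq_three {x y lam : ℝ} (hx : 0 < x)
    (hy : 0 < y) (h : x ^ 2 + x * y + y ^ 2 = 3) (hlam : lam < 0) :
    2 + 2 ^ lam ≤ x ^ lam + y ^ lam + (x + y) ^ lam ∧
      (x ^ lam + y ^ lam + (x + y) ^ lam = 2 + 2 ^ lam ↔ x + y = 2) := by
  have hsum : x + y ≤ 2 := by nlinarith [sq_nonneg (x - y)]
  have hxy : 2 ≤ x ^ lam + y ^ lam :=
    two_le_rpow_add_rpow hx hy (by nlinarith [sq_nonneg (x - y)]) hlam.le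
  have hxy_pos : 0 < x + y := add_pos hx hy
  refine ⟨by linarith [rpow_le_rpow_of_nonpos hxy_pos hsum hlam.le], ⟨fun heq ↦ ?_, fun h2 ↦ ?_⟩⟩
  · by_contra hne
    linarith [rpow_lt_rpow_of_neg hxy_pos (hsum.lt_of_ne hne) hlam]
  · obtain rfl : x = 1 := by nlinarith
    obtain rfl : y = 1 := by linarith
    norm_num

section InnerProductSpace

variable {E : Type*} [NormedAddCommGroup E] [InnerProductSpace ℝ E] {M U V A B C : E}

theorem dist_sq_eq_two_sub_two_inner_s9 (hM : ‖M‖ = 1) (hV : ‖V‖ = 1) :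
    dist M V ^ 2 = 2 - 2 * ⟪M, V⟫ := by
  rw [dist_eq_norm, norm_sub_sq_real, hM, hV]
  ring

theorem inner_eq_neg_half_of_dist_eq_sqrt_three_s9 (hU : ‖U‖ = 1) (hV : ‖V‖ = 1)
    (h : dist U V = √3) : ⟪U, V⟫ = -1 / 2 := by
  have := dist_sq_eq_two_sub_two_inner_s9 hU hV
  rw [h, Real.sq_sqrt (by norm_num)] at this
  linarith

theorem dist_eq_two_iff_eq_neg (hM : ‖M‖ = 1) (hV : ‖V‖ = 1) : dist M V = 2 ↔ M = -V := by
  rw [← inner_eq_neg_one_iff_of_norm_eq_one (𝕜 := ℝ) hM hV]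
  have hsq := dist_sq_eq_two_sub_two_inner_s9 hM hV
  constructor
  · intro h
    rw [h] at hsq
    linarith
  · intro h
    rw [h] at hsq
    nlinarith [dist_nonneg (x := M) (y := V)]

theorem inner_add_inner_add_inner_eq_zero (hA : ‖A‖ = 1) (hB : ‖B‖ = 1) (hC : ‖C‖ = 1)
    (hAB : ⟪A, B⟫ = -1 / 2) (hBC : ⟪B, C⟫ = -1 / 2) (hCA : ⟪C, A⟫ = -1 / 2) (M : E) :
    ⟪M, A⟫ + ⟪M, B⟫ + ⟪M, C⟫ = 0 := by
  have hcentroid : A + B + C = 0 := by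
    rw [← norm_eq_zero, ← sq_eq_zero_iff, norm_add_sq_real, norm_add_sq_real, inner_add_left,
      hA, hB, hC, hAB, hBC, real_inner_comm, hCA]
    norm_num
  rw [← inner_add_right, ← inner_add_right, hcentroid, inner_zero_right]

end InnerProductSpace

section EuclideanPlane

variable {M A B C U V : EuclideanSpace ℝ (Fin 2)}

theorem inner_sq_add_inner_mul_inner_add_inner_sq (hM : ‖M‖ = 1) (hU : ‖U‖ = 1) (hV : ‖V‖ = 1)
    (hUV : ⟪U, V⟫ = -1 / 2) : ⟪M, U⟫ ^ 2 + ⟪M, U⟫ * ⟪M, V⟫ + ⟪M, V⟫ ^ 2 = 3 / 4 := by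
  have h := det_gram_eq_zero_of_finrank_lt (𝕜 := ℝ) (v := ![M, U, V]) (by simp)
  simp only [det_fin_three, gram_apply, Matrix.cons_val, real_inner_self_eq_norm_sq] at h
  rw [real_inner_comm M U, real_inner_comm M V, real_inner_comm U V, hM, hU, hV, hUV] at h
  linear_combination -h

theorem exists_inner_le_neg_half (hM : ‖M‖ = 1) (hA : ‖A‖ = 1) (hB : ‖B‖ = 1) (hC : ‖C‖ = 1)
    (hAB : ⟪A, B⟫ = -1 / 2) (hBC : ⟪B, C⟫ = -1 / 2) (hCA : ⟪C, A⟫ = -1 / 2) :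
    ⟪M, A⟫ ≤ -1 / 2 ∨ ⟪M, B⟫ ≤ -1 / 2 ∨ ⟪M, C⟫ ≤ -1 / 2 := by
  have hsum := inner_add_inner_add_inner_eq_zero hA hB hC hAB hBC hCA M
  have hpair := inner_sq_add_inner_mul_inner_add_inner_sq hM hA hB hAB
  have hc_le : ⟪M, C⟫ ≤ 1 := by simpa [hM, hC] using real_inner_le_norm M C
  by_contra! h
  obtain ⟨ha, hb, hc⟩ := h
  -- with `a, b, c` the three inner products, `a + b = -c` and `a b = c² - 3/4` give
  -- `(a + 1/2) (b + 1/2) = (c - 1) (c + 1/2) ≤ 0`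
  nlinarith [mul_pos (sub_pos.mpr ha) (sub_pos.mpr hb)]

theorem dist_eq_dist_add_dist_of_inner_le_neg_half (hM : ‖M‖ = 1) (hA : ‖A‖ = 1)
    (hB : ‖B‖ = 1) (hC : ‖C‖ = 1) (hAB : ⟪A, B⟫ = -1 / 2) (hBC : ⟪B, C⟫ = -1 / 2)
    (hCA : ⟪C, A⟫ = -1 / 2) (ha : ⟪M, A⟫ ≤ -1 / 2) :
    dist M B ^ 2 + dist M B * dist M C + dist M C ^ 2 = 3 ∧
      dist M A = dist M B + dist M C := by
  have hsum := inner_add_inner_add_inner_eq_zero hA hB hC hAB hBC hCA M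
  have hpair := inner_sq_add_inner_mul_inner_add_inner_sq hM hB hC hBC
  have hx := dist_sq_eq_two_sub_two_inner_s9 hM hB
  have hy := dist_sq_eq_two_sub_two_inner_s9 hM hC
  have hz := dist_sq_eq_two_sub_two_inner_s9 hM hA
  have hxy : dist M B * dist M C = -(2 * ⟪M, A⟫ + 1) := by
    refine (pow_left_inj₀ (by positivity) (by linarith) two_ne_zero).mp ?_
    linear_combination dist M C ^ 2 * hx + (2 - 2 * ⟪M, B⟫) * hy - 4 * hpair +
      (4 * ⟪M, B⟫ + 4 * ⟪M, C⟫ - 4 * ⟪M, A⟫ - 4) * hsum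
  refine ⟨by linear_combination hx + hy + hxy - 2 * hsum, ?_⟩
  refine (pow_left_inj₀ dist_nonneg (by positivity) two_ne_zero).mp ?_
  linear_combination hz - hx - hy - 2 * hxy + 2 * hsum

theorem two_add_two_rpow_le_sum_dist_rpow_of_inner_le_neg_half (hM : ‖M‖ = 1) (hA : ‖A‖ = 1)
    (hB : ‖B‖ = 1) (hC : ‖C‖ = 1) (hAB : ⟪A, B⟫ = -1 / 2) (hBC : ⟪B, C⟫ = -1 / 2)
    (hCA : ⟪C, A⟫ = -1 / 2) (ha : ⟪M, A⟫ ≤ -1 / 2) (hMB : M ≠ B) (hMC : M ≠ C) {lam : ℝ}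
    (hlam : lam < 0) :
    2 + (2 : ℝ) ^ lam ≤ dist M A ^ lam + dist M B ^ lam + dist M C ^ lam ∧
      (dist M A ^ lam + dist M B ^ lam + dist M C ^ lam = 2 + (2 : ℝ) ^ lam ↔
        M = -A ∨ M = -B ∨ M = -C) := by
  obtain ⟨hcos, hptolemy⟩ :=
    dist_eq_dist_add_dist_of_inner_le_neg_half hM hA hB hC hAB hBC hCA ha
  obtain ⟨hle, heq⟩ := Real.two_add_two_rpow_le_of_sq_add_mul_add_sq_eq_three
    (dist_pos.mpr hMB) (dist_pos.mpr hMC) hcos hlam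
  rw [add_rotate (dist M A ^ lam), hptolemy]
  refine ⟨hle, heq.trans ?_⟩
  rw [← hptolemy, dist_eq_two_iff_eq_neg hM hA]
  refine ⟨Or.inl, ?_⟩
  rintro (h | h | h)
  · exact h
  · rw [h, inner_neg_left, real_inner_comm, hAB] at ha
    norm_num at ha
  · rw [h, inner_neg_left, hCA] at ha
    norm_num at ha

end EuclideanPlane

theorem stmt_9 (A B C : EuclideanSpace ℝ (Fin 2))
    (hA : A ∈ Metric.sphere (0 : EuclideanSpace ℝ (Fin 2)) 1)
    (hB : B ∈ Metric.sphere (0 : EuclideanSpace ℝ (Fin 2)) 1)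
    (hC : C ∈ Metric.sphere (0 : EuclideanSpace ℝ (Fin 2)) 1)
    (hAB : dist A B = Real.sqrt 3) (hBC : dist B C = Real.sqrt 3)
    (hCA : dist C A = Real.sqrt 3)
    (lam : ℝ) (hlam : lam < 0) :
    ∀ M ∈ Metric.sphere (0 : EuclideanSpace ℝ (Fin 2)) 1,
      M ≠ A → M ≠ B → M ≠ C →
      (2 + (2 : ℝ) ^ lam ≤ dist M A ^ lam + dist M B ^ lam + dist M C ^ lam ∧
      (dist M A ^ lam + dist M B ^ lam + dist M C ^ lam = 2 + (2 : ℝ) ^ lam ↔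
        M = -A ∨ M = -B ∨ M = -C)) := by
  intro M hM hMA hMB hMC
  rw [mem_sphere_zero_iff_norm] at hA hB hC hM
  replace hAB := inner_eq_neg_half_of_dist_eq_sqrt_three_s9 hA hB hAB
  replace hBC := inner_eq_neg_half_of_dist_eq_sqrt_three_s9 hB hC hBC
  replace hCA := inner_eq_neg_half_of_dist_eq_sqrt_three_s9 hC hA hCA
  rcases exists_inner_le_neg_half hM hA hB hC hAB hBC hCA with h | h | h
  · exact two_add_two_rpow_le_sum_dist_rpow_of_inner_le_neg_half hM hA hB hC hAB hBC hCA h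
      hMB hMC hlam
  · rw [add_rotate, or_rotate]
    exact two_add_two_rpow_le_sum_dist_rpow_of_inner_le_neg_half hM hB hC hA hBC hCA hAB h
      hMC hMA hlam
  · rw [← add_rotate, ← or_rotate]
    exact two_add_two_rpow_le_sum_dist_rpow_of_inner_le_neg_half hM hC hA hB hCA hAB hBC h
      hMA hMB hlam
end

section
/- Let $A$, $B$, $C$ be points on the unit circle with center $O$ such that the angle at $C$ is the largest angle of triangle $ABC$, and let $M$ be the second intersection of line $CO$ with the unit circle (the antipode of $C$). Then $MA + MB \ge 2$. -/
/-! Since `CM` is a diameter, `CM = 2`. Ptolemy's inequality for the quadrangle `ACBM` gives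
`AB · CM ≤ AC · BM + BC · AM`, and the largest angle of the triangle sits at `C`, so `AB` is
its longest side; hence `2 · AB ≤ AB · (AM + BM)`. -/

open EuclideanGeometry

section

variable {V P : Type*} [NormedAddCommGroup V] [InnerProductSpace ℝ V] [MetricSpace P]
  [NormedAddTorsor V P]

theorem dist_le_dist_add_dist_of_dist_le_of_dist_le {a b c : V} (m : V) (hab : a ≠ b)
    (hca : dist c a ≤ dist a b) (hcb : dist c b ≤ dist a b) :
    dist c m ≤ dist m a + dist m b := by
  refine le_of_mul_le_mul_left ?_ (dist_pos.mpr hab)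
  calc dist a b * dist c m
      ≤ dist a c * dist b m + dist c b * dist a m := mul_dist_le_mul_dist_add_mul_dist a c b m
    _ ≤ dist a b * dist b m + dist a b * dist a m := by
        rw [dist_comm a c]
        gcongr
    _ = dist a b * (dist m a + dist m b) := by
        rw [dist_comm b m, dist_comm a m]
        ring

theorem dist_le_dist_of_angle_le_of_angle_le {a b c : P}
    (h : ¬Collinear ℝ ({a, b, c} : Set P)) (ha : ∠ b a c ≤ ∠ a c b) (hb : ∠ a b c ≤ ∠ a c b) :
    dist c a ≤ dist a b ∧ dist c b ≤ dist a b := by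
  constructor
  · rw [dist_comm c a]
    exact (angle_le_iff_dist_le (by rwa [Set.pair_comm c b])).mp hb
  · rw [dist_comm c b, dist_comm a b]
    refine (angle_le_iff_dist_le ?_).mp (by rwa [angle_comm b c a])
    rwa [Set.pair_comm c a, Set.insert_comm b a]

end

theorem stmt_10 (A B C : EuclideanSpace ℝ (Fin 2))
    (hA : A ∈ Metric.sphere (0 : EuclideanSpace ℝ (Fin 2)) 1)
    (hB : B ∈ Metric.sphere (0 : EuclideanSpace ℝ (Fin 2)) 1)
    (hC : C ∈ Metric.sphere (0 : EuclideanSpace ℝ (Fin 2)) 1)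
    (hAB : A ≠ B) (hBC : B ≠ C) (hCA : C ≠ A)
    (h1 : EuclideanGeometry.angle B A C ≤ EuclideanGeometry.angle A C B)
    (h2 : EuclideanGeometry.angle A B C ≤ EuclideanGeometry.angle A C B) :
    2 ≤ dist (-C) A + dist (-C) B := by
  have hcospherical : Cospherical ({A, B, C} : Set (EuclideanSpace ℝ (Fin 2))) := by
    refine ⟨0, 1, ?_⟩
    rintro p (rfl | rfl | rfl) <;> assumption
  have hncol : ¬Collinear ℝ ({A, B, C} : Set (EuclideanSpace ℝ (Fin 2))) :=
    affineIndependent_iff_not_collinear_set.mp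
      (hcospherical.affineIndependent_of_ne hAB hCA.symm hBC)
  obtain ⟨hCA_le, hCB_le⟩ := dist_le_dist_of_angle_le_of_angle_le hncol h1 h2
  have hdiam : dist C (-C) = 2 := by
    rw [mem_sphere_zero_iff_norm] at hC
    rw [dist_eq_norm, sub_neg_eq_add, ← two_smul ℝ C, norm_smul, hC]
    norm_num
  simpa [hdiam] using dist_le_dist_add_dist_of_dist_le_of_dist_le (-C) hAB hCA_le hCB_le
end

section
/- For $\lambda < 0$, the function $F(x) = 2^{\lambda}\left(2\sin^{\lambda}(x/2) + \sin^{\lambda}(3x/2)\right)$ is convex on the interval $[\pi/3, \pi/2)$. -/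
/-!
Both `sin (x / 2)` and `sin (3 * x / 2)` are concave and positive on `[π/3, π/2)`, since their
arguments stay in `(0, π)`. For `λ ≤ 0` the power `t ↦ t ^ λ` is convex and antitone on `(0, ∞)`
(it is `exp (λ log t)` with `λ log` convex), so composing it with a positive concave function
gives a convex function; a nonnegative combination of the two terms is then convex.
-/

open Real Set

section Composition

variable {𝕜 E β α : Type*} [Semiring 𝕜] [PartialOrder 𝕜] [AddCommMonoid E]
  [AddCommMonoid α] [PartialOrder α] [AddCommMonoid β] [PartialOrder β]
  [SMul 𝕜 E] [SMul 𝕜 α] [SMul 𝕜 β] {s : Set E} {t : Set β} {f : E → β} {g : β → α}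

theorem ConvexOn.comp_of_mapsTo (hg : ConvexOn 𝕜 t g) (hf : ConvexOn 𝕜 s f)
    (hg' : MonotoneOn g t) (hst : MapsTo f s t) : ConvexOn 𝕜 s (g ∘ f) :=
  ⟨hf.1, fun _ hx _ hy _ _ ha hb hab =>
    (hg' (hst (hf.1 hx hy ha hb hab)) (hg.1 (hst hx) (hst hy) ha hb hab)
      (hf.2 hx hy ha hb hab)).trans (hg.2 (hst hx) (hst hy) ha hb hab)⟩

theorem ConvexOn.comp_concaveOn_of_mapsTo (hg : ConvexOn 𝕜 t g) (hf : ConcaveOn 𝕜 s f)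
    (hg' : AntitoneOn g t) (hst : MapsTo f s t) : ConvexOn 𝕜 s (g ∘ f) :=
  ⟨hf.1, fun _ hx _ hy _ _ ha hb hab =>
    (hg' (hg.1 (hst hx) (hst hy) ha hb hab) (hst (hf.1 hx hy ha hb hab))
      (hf.2 hx hy ha hb hab)).trans (hg.2 (hst hx) (hst hy) ha hb hab)⟩

end Composition

theorem convexOn_rpow_of_nonpos {p : ℝ} (hp : p ≤ 0) :
    ConvexOn ℝ (Ioi 0) fun x : ℝ => x ^ p := by
  have hlog : ConvexOn ℝ (Ioi 0) fun x => -p • -log x :=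
    strictConcaveOn_log_Ioi.concaveOn.neg.smul (neg_nonneg.2 hp)
  refine (convexOn_exp.comp_of_mapsTo hlog (exp_monotone.monotoneOn _)
    (mapsTo_univ _ _)).congr fun x hx => ?_
  simp only [Function.comp_apply, smul_eq_mul, neg_mul_neg, rpow_def_of_pos (mem_Ioi.1 hx),
    mul_comm]

theorem ConcaveOn.convexOn_rpow_of_nonpos {s : Set ℝ} {f : ℝ → ℝ} {p : ℝ} (hf : ConcaveOn ℝ s f)
    (hpos : ∀ x ∈ s, 0 < f x) (hp : p ≤ 0) : ConvexOn ℝ s fun x => f x ^ p :=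
  (_root_.convexOn_rpow_of_nonpos hp).comp_concaveOn_of_mapsTo hf
    (fun _ hx _ _ hxy => rpow_le_rpow_of_nonpos hx hxy hp) hpos

theorem concaveOn_sin_mul {s : Set ℝ} (hs : Convex ℝ s) {c : ℝ}
    (hc : MapsTo (c * ·) s (Icc 0 π)) : ConcaveOn ℝ s fun x => sin (c * x) :=
  (strictConcaveOn_sin_Icc.concaveOn.comp_linearMap (LinearMap.mulLeft ℝ c)).subset hc hs

theorem convexOn_rpow_sin_mul {s : Set ℝ} (hs : Convex ℝ s) {c p : ℝ}
    (hc : MapsTo (c * ·) s (Ioo 0 π)) (hp : p ≤ 0) : ConvexOn ℝ s fun x => sin (c * x) ^ p :=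
  (concaveOn_sin_mul hs (hc.mono_right Ioo_subset_Icc_self)).convexOn_rpow_of_nonpos
    (fun _ hx => sin_pos_of_pos_of_lt_pi (hc hx).1 (hc hx).2) hp

theorem stmt_12 (lam : ℝ) (hlam : lam < 0) :
    ConvexOn ℝ (Set.Ico (Real.pi / 3) (Real.pi / 2))
      (fun x : ℝ => (2 : ℝ) ^ lam *
        (2 * Real.sin (x / 2) ^ lam + Real.sin (3 * x / 2) ^ lam)) := by
  have hs : Convex ℝ (Ico (π / 3) (π / 2)) := convex_Ico _ _
  have hhalf : MapsTo ((1 / 2 : ℝ) * ·) (Ico (π / 3) (π / 2)) (Ioo 0 π) :=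
    fun x hx => ⟨by linarith [hx.1, pi_pos], by linarith [hx.2, pi_pos]⟩
  have hthreeHalves : MapsTo ((3 / 2 : ℝ) * ·) (Ico (π / 3) (π / 2)) (Ioo 0 π) :=
    fun x hx => ⟨by linarith [hx.1, pi_pos], by linarith [hx.2, pi_pos]⟩
  have hsum := ((convexOn_rpow_sin_mul hs hhalf hlam.le).smul (zero_le_two : (0 : ℝ) ≤ 2)).add
    (convexOn_rpow_sin_mul hs hthreeHalves hlam.le)
  refine (hsum.smul (rpow_nonneg zero_le_two lam)).congr fun x _ => ?_
  simp only [Pi.add_apply, smul_eq_mul]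
  ring_nf
end

section
/- $2 + 2^{\lambda} = 2(\sqrt{3})^{\lambda}$ for $\lambda \in \{2,4\}$, $2 + 2^{\lambda} < 2(\sqrt{3})^{\lambda}$ for $\lambda \in (2,4)$, and $2 + 2^{\lambda} > 2(\sqrt{3})^{\lambda}$ for $\lambda > 4$. -/
open Real Set

private noncomputable def fcvx : ℝ → ℝ := fun x => (2:ℝ) ^ x + 2 - 2 * Real.sqrt 3 ^ x

private lemma s3pos : (0:ℝ) < Real.sqrt 3 := Real.sqrt_pos.mpr (by norm_num)

private lemma fderiv1 (x : ℝ) :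
    HasDerivAt fcvx ((2:ℝ) ^ x * Real.log 2 - 2 * (Real.sqrt 3 ^ x * Real.log (Real.sqrt 3))) x := by
  have h1 := (hasStrictDerivAt_const_rpow (by norm_num : (0:ℝ) < 2) x).hasDerivAt
  have h2 := (hasStrictDerivAt_const_rpow s3pos x).hasDerivAt
  exact (h1.add_const 2).sub (h2.const_mul 2)

private lemma fcvx_deriv_eq : deriv fcvx =
    fun x => (2:ℝ) ^ x * Real.log 2 - 2 * (Real.sqrt 3 ^ x * Real.log (Real.sqrt 3)) :=
  funext fun x => (fderiv1 x).deriv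

private lemma fderiv2 (x : ℝ) :
    HasDerivAt (deriv fcvx)
      ((2:ℝ) ^ x * Real.log 2 * Real.log 2 -
        2 * (Real.sqrt 3 ^ x * Real.log (Real.sqrt 3) * Real.log (Real.sqrt 3))) x := by
  rw [fcvx_deriv_eq]
  have h1 := (hasStrictDerivAt_const_rpow (by norm_num : (0:ℝ) < 2) x).hasDerivAt
  have h2 := (hasStrictDerivAt_const_rpow s3pos x).hasDerivAt
  exact (h1.mul_const (Real.log 2)).sub ((h2.mul_const (Real.log (Real.sqrt 3))).const_mul 2)

private lemma log3_sq_lt : 3 * Real.log 3 ^ 2 < 8 * Real.log 2 ^ 2 := by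
  have h17 : Real.log (3 ^ 17 : ℝ) < Real.log (2 ^ 27 : ℝ) :=
    Real.log_lt_log (by positivity) (by norm_num)
  rw [Real.log_pow, Real.log_pow] at h17
  push_cast at h17
  have h2 : (0:ℝ) < Real.log 2 := Real.log_pos (by norm_num)
  have h3 : (0:ℝ) < Real.log 3 := Real.log_pos (by norm_num)
  nlinarith [sq_nonneg (Real.log 3 - Real.log 2)]

private lemma fconvex : StrictConvexOn ℝ (Set.Ici (2:ℝ)) fcvx := by
  apply strictConvexOn_of_deriv2_pos (convex_Ici 2)
  · exact (continuous_iff_continuousAt.mpr fun x => (fderiv1 x).continuousAt).continuousOn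
  · intro x hx
    rw [interior_Ici] at hx
    have hiter : (deriv^[2] fcvx) x = deriv (deriv fcvx) x := by
      simp [Function.iterate_succ, Function.comp]
    rw [hiter, (fderiv2 x).deriv]
    have hls : Real.log (Real.sqrt 3) = Real.log 3 / 2 := by
      rw [Real.log_sqrt (by norm_num)]
    rw [hls]
    -- need: 2 * (√3^x * (log 3 / 2) * (log 3 / 2)) < 2^x * log 2 * log 2
    have hkey : Real.sqrt 3 ^ x ≤ (3/4) * (2:ℝ) ^ x := by
      have hb : (0:ℝ) < Real.sqrt 3 / 2 := by positivity
      have hb1 : Real.sqrt 3 / 2 ≤ 1 := by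
        rw [div_le_one (by norm_num)]
        nlinarith [Real.sq_sqrt (by norm_num : (0:ℝ) ≤ 3), Real.sqrt_nonneg 3]
      have h1 : (Real.sqrt 3 / 2) ^ x ≤ (Real.sqrt 3 / 2) ^ (2:ℝ) :=
        Real.rpow_le_rpow_of_exponent_ge hb hb1 hx.le
      have h2 : (Real.sqrt 3 / 2) ^ (2:ℝ) = 3/4 := by
        rw [show (2:ℝ) = ((2:ℕ):ℝ) by norm_num, Real.rpow_natCast, div_pow,
          Real.sq_sqrt (by norm_num : (0:ℝ) ≤ 3)]
        norm_num
      have h3 : (Real.sqrt 3 / 2) ^ x = Real.sqrt 3 ^ x / (2:ℝ) ^ x :=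
        Real.div_rpow (Real.sqrt_nonneg 3) (by norm_num : (0:ℝ) ≤ 2) x
      rw [h3, h2] at h1
      have h2x : (0:ℝ) < (2:ℝ) ^ x := Real.rpow_pos_of_pos (by norm_num) x
      calc Real.sqrt 3 ^ x = (Real.sqrt 3 ^ x / (2:ℝ) ^ x) * (2:ℝ) ^ x := by
            field_simp
        _ ≤ (3/4) * (2:ℝ) ^ x := by
            apply mul_le_mul_of_nonneg_right h1 h2x.le
    have h2x : (0:ℝ) < (2:ℝ) ^ x := Real.rpow_pos_of_pos (by norm_num) x
    have hsx : (0:ℝ) < Real.sqrt 3 ^ x := Real.rpow_pos_of_pos s3pos x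
    have hl3 : (0:ℝ) < Real.log 3 := Real.log_pos (by norm_num)
    have hl2 : (0:ℝ) < Real.log 2 := Real.log_pos (by norm_num)
    nlinarith [log3_sq_lt, mul_le_mul_of_nonneg_right hkey (sq_nonneg (Real.log 3)),
      mul_pos h2x (mul_pos hl2 hl2)]

private lemma f2 : fcvx 2 = 0 := by
  unfold fcvx
  rw [show ((2:ℝ)) = ((2:ℕ):ℝ) by norm_num, Real.rpow_natCast, Real.rpow_natCast,
    Real.sq_sqrt (by norm_num : (0:ℝ) ≤ 3)]
  norm_num

private lemma f4 : fcvx 4 = 0 := by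
  unfold fcvx
  rw [show ((4:ℝ)) = ((4:ℕ):ℝ) by norm_num, Real.rpow_natCast, Real.rpow_natCast,
    show (Real.sqrt 3) ^ (4:ℕ) = ((Real.sqrt 3) ^ 2) ^ 2 by ring,
    Real.sq_sqrt (by norm_num : (0:ℝ) ≤ 3)]
  norm_num

theorem stmt_16 :
    (2 + (2 : ℝ) ^ (2 : ℝ) = 2 * Real.sqrt 3 ^ (2 : ℝ) ∧
      2 + (2 : ℝ) ^ (4 : ℝ) = 2 * Real.sqrt 3 ^ (4 : ℝ)) ∧
    (∀ lam : ℝ, 2 < lam → lam < 4 → 2 + (2 : ℝ) ^ lam < 2 * Real.sqrt 3 ^ lam) ∧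
    (∀ lam : ℝ, 4 < lam → 2 * Real.sqrt 3 ^ lam < 2 + (2 : ℝ) ^ lam) := by
  have hf2 := f2; have hf4 := f4; unfold fcvx at hf2 hf4
  refine ⟨⟨by linarith, by linarith⟩, ?_, ?_⟩
  · intro lam h2 h4
    have ha : (0:ℝ) < (4 - lam) / 2 := by linarith
    have hb : (0:ℝ) < (lam - 2) / 2 := by linarith
    have := fconvex.2 (Set.self_mem_Ici) (by norm_num : (4:ℝ) ∈ Set.Ici 2)
      (by norm_num : (2:ℝ) ≠ 4) ha hb (by ring)
    rw [f2, f4] at this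
    simp only [smul_eq_mul] at this
    have hx : (4 - lam) / 2 * 2 + (lam - 2) / 2 * 4 = lam := by ring
    rw [hx] at this
    have : fcvx lam < 0 := by linarith
    unfold fcvx at this
    linarith
  · intro lam h4
    have ha : (0:ℝ) < (lam - 4) / (lam - 2) := by
      apply div_pos <;> linarith
    have hb : (0:ℝ) < 2 / (lam - 2) := by
      apply div_pos <;> linarith
    have hne : lam - 2 ≠ 0 := by intro h; linarith [h]
    have hab : (lam - 4) / (lam - 2) + 2 / (lam - 2) = 1 := by
      field_simp; ring
    have := fconvex.2 (Set.self_mem_Ici) (by simp; linarith : lam ∈ Set.Ici (2:ℝ))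
      (by intro h; linarith [h] : (2:ℝ) ≠ lam) ha hb hab
    rw [f2] at this
    simp only [smul_eq_mul] at this
    have hx : (lam - 4) / (lam - 2) * 2 + 2 / (lam - 2) * lam = 4 := by
      field_simp; ring
    rw [hx, f4] at this
    have hpos : 0 < fcvx lam := by
      by_contra h
      push_neg at h
      nlinarith
    unfold fcvx at hpos
    linarith
end

section
/- Let $A$, $B$, $C$ be points on the unit circle with $\angle ACB \ge \pi/2$ being the largest angle of triangle $ABC$, let $\lambda \ge 2$, and let $M$ be the antipode of $C$ on the unit circle. Then $MA^{\lambda} + MB^{\lambda} + MC^{\lambda} > 2 + 2^{\lambda}$. -/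
/-! With `M = -C` we have `MC = 2`, and `MX = ‖X + C‖`. The angle at `C` being at least `π/2`
forces `MA² + MB² ≥ 4`, so the power mean inequality gives `MA^λ + MB^λ ≥ 2 · 2^(λ/2) ≥ 4 > 2`. -/

open Real InnerProductGeometry RealInnerProductSpace

theorem InnerProductGeometry.inner_nonpos_of_pi_div_two_le_angle {V : Type*}
    [NormedAddCommGroup V] [InnerProductSpace ℝ V] {x y : V} (h : π / 2 ≤ angle x y) :
    ⟪x, y⟫ ≤ 0 := by
  rw [← cos_angle_mul_norm_mul_norm]
  exact mul_nonpos_of_nonpos_of_nonneg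
    (cos_nonpos_of_pi_div_two_le_of_le h (by linarith [angle_le_pi x y, pi_pos]))
    (by positivity)

/-- With `a, b, c` on the unit sphere, `‖a + c‖² + ‖b + c‖² - 4 = 2⟪a + b, c⟫`, while
`⟪a - c, b - c⟫ ≤ 0` says `⟪a + b, c⟫ ≥ 1 + ⟪a, b⟫ ≥ 0`. -/
theorem four_le_norm_add_sq_add_norm_add_sq {E : Type*} [NormedAddCommGroup E]
    [InnerProductSpace ℝ E] {a b c : E} (ha : ‖a‖ = 1) (hb : ‖b‖ = 1) (hc : ‖c‖ = 1)
    (h : ⟪a - c, b - c⟫ ≤ 0) : 4 ≤ ‖a + c‖ ^ 2 + ‖b + c‖ ^ 2 := by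
  have hab : -1 ≤ ⟪a, b⟫ := by
    have := neg_abs_le ⟪a, b⟫
    have := abs_real_inner_le_norm a b
    rw [ha, hb] at this
    linarith
  have hcc : ⟪c, c⟫ = 1 := by rw [real_inner_self_eq_norm_sq, hc, one_pow]
  rw [norm_add_sq_real, norm_add_sq_real, ha, hb, hc]
  simp only [inner_sub_left, inner_sub_right, hcc, real_inner_comm b c] at h
  linarith

theorem two_mul_rpow_half_add_le {a b p : ℝ} (ha : 0 ≤ a) (hb : 0 ≤ b) (hp : 1 ≤ p) :
    2 * ((a + b) / 2) ^ p ≤ a ^ p + b ^ p := by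
  have := (convexOn_rpow hp).2 (Set.mem_Ici.2 ha) (Set.mem_Ici.2 hb)
    (by norm_num : (0 : ℝ) ≤ 1 / 2) (by norm_num : (0 : ℝ) ≤ 1 / 2) (by norm_num)
  simp only [smul_eq_mul] at this
  rw [show (a + b) / 2 = 1 / 2 * a + 1 / 2 * b by ring]
  linarith

theorem four_le_rpow_add_rpow_of_four_le_sq_add_sq {x y lam : ℝ} (hx : 0 ≤ x) (hy : 0 ≤ y)
    (hlam : 2 ≤ lam) (h : 4 ≤ x ^ 2 + y ^ 2) : 4 ≤ x ^ lam + y ^ lam := by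
  have hsq : ∀ t : ℝ, 0 ≤ t → t ^ lam = (t ^ 2) ^ (lam / 2) := fun t ht => by
    rw [← rpow_natCast, ← rpow_mul ht]
    norm_num [mul_div_cancel₀]
  have hmean : 2 ≤ (x ^ 2 + y ^ 2) / 2 := by linarith
  calc (4 : ℝ) = 2 * 2 ^ (1 : ℝ) := by norm_num
    _ ≤ 2 * 2 ^ (lam / 2) := by gcongr <;> linarith
    _ ≤ 2 * ((x ^ 2 + y ^ 2) / 2) ^ (lam / 2) := by gcongr
    _ ≤ (x ^ 2) ^ (lam / 2) + (y ^ 2) ^ (lam / 2) :=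
      two_mul_rpow_half_add_le (by positivity) (by positivity) (by linarith)
    _ = x ^ lam + y ^ lam := by rw [hsq x hx, hsq y hy]

theorem stmt_17_general (A B C : EuclideanSpace ℝ (Fin 2))
    (hA : A ∈ Metric.sphere (0 : EuclideanSpace ℝ (Fin 2)) 1)
    (hB : B ∈ Metric.sphere (0 : EuclideanSpace ℝ (Fin 2)) 1)
    (hC : C ∈ Metric.sphere (0 : EuclideanSpace ℝ (Fin 2)) 1)
    (hobt : Real.pi / 2 ≤ EuclideanGeometry.angle A C B)
    (lam : ℝ) (hlam : 2 ≤ lam) :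
    2 + (2 : ℝ) ^ lam <
      dist (-C) A ^ lam + dist (-C) B ^ lam + dist (-C) C ^ lam := by
  have nA : ‖A‖ = 1 := by simpa using hA
  have nB : ‖B‖ = 1 := by simpa using hB
  have nC : ‖C‖ = 1 := by simpa using hC
  have dist_antipode : ∀ P, dist (-C) P = ‖P + C‖ := fun P => by
    rw [dist_comm, dist_eq_norm, sub_neg_eq_add]
  have hMC : dist (-C) C = 2 := by
    rw [dist_antipode, ← two_smul ℝ C, norm_smul, nC]
    norm_num
  have hsum : 4 ≤ dist (-C) A ^ 2 + dist (-C) B ^ 2 := by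
    rw [dist_antipode, dist_antipode]
    exact four_le_norm_add_sq_add_norm_add_sq nA nB nC
      (inner_nonpos_of_pi_div_two_le_angle hobt)
  have := four_le_rpow_add_rpow_of_four_le_sq_add_sq dist_nonneg dist_nonneg hlam hsum
  rw [hMC]
  linarith

theorem stmt_17 (A B C : EuclideanSpace ℝ (Fin 2))
    (hA : A ∈ Metric.sphere (0 : EuclideanSpace ℝ (Fin 2)) 1)
    (hB : B ∈ Metric.sphere (0 : EuclideanSpace ℝ (Fin 2)) 1)
    (hC : C ∈ Metric.sphere (0 : EuclideanSpace ℝ (Fin 2)) 1)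
    (hAB : A ≠ B) (hBC : B ≠ C) (hCA : C ≠ A)
    (hobt : Real.pi / 2 ≤ EuclideanGeometry.angle A C B)
    (h1 : EuclideanGeometry.angle B A C ≤ EuclideanGeometry.angle A C B)
    (h2 : EuclideanGeometry.angle A B C ≤ EuclideanGeometry.angle A C B)
    (lam : ℝ) (hlam : 2 ≤ lam) :
    2 + (2 : ℝ) ^ lam <
      dist (-C) A ^ lam + dist (-C) B ^ lam + dist (-C) C ^ lam :=
  stmt_17_general A B C hA hB hC hobt lam hlam
end

section
/- Let $\lambda > 0$ and let $A$, $B$, $C$ be points on the unit circle with $AB$ the shortest side of triangle $ABC$. Let $M'$ be the intersection of the perpendicular bisector of $AB$ with the unit circle on the far arc (so that $\angle BAM' = \angle ABM' \ge \pi/3$). Then $M'A^{\lambda} + M'B^{\lambda} + M'C^{\lambda} \ge 2(\sqrt{3})^{\lambda}$, with equality only if $ABC$ is equilateral. -/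
/-!
By the inscribed angle theorem (law of sines on the unit circle) a chord subtending an inscribed
angle `θ` has length `2 sin θ`. In the isosceles triangle `ABM'` with base angles `x = ∠BAM'` this
gives `M'A = M'B = 2 sin x`, and `x ∈ [π/3, π/2]` (the apex angle is `π - 2x ≥ 0`), so both are at
least `√3`. Equality in the sum forces `M' = C` and `x = π/3`, and then `AB = 2 sin (2π/3) = √3`
as well.
-/

open EuclideanGeometry Real Module

namespace EuclideanGeometry

variable {V P : Type*} [NormedAddCommGroup V] [InnerProductSpace ℝ V] [MetricSpace P]
  [NormedAddTorsor V P]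

theorem Sphere.dist_eq_two_mul_radius_mul_sin_angle [Fact (finrank ℝ V = 2)] {s : Sphere P}
    {p₁ p₂ p₃ : P} (hp₁ : p₁ ∈ s) (hp₂ : p₂ ∈ s) (hp₃ : p₃ ∈ s) (hp₁p₂ : p₁ ≠ p₂)
    (hp₁p₃ : p₁ ≠ p₃) (hp₂p₃ : p₂ ≠ p₃) :
    dist p₁ p₃ = 2 * s.radius * Real.sin (∠ p₁ p₂ p₃) := by
  have : FiniteDimensional ℝ V := .of_fact_finrank_eq_two
  have : Module.Oriented ℝ V (Fin 2) := ⟨Basis.orientation (finBasisOfFinrankEq _ _ Fact.out)⟩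
  have key := Sphere.dist_div_sin_oangle_eq_two_mul_radius hp₁ hp₂ hp₃ hp₁p₂ hp₁p₃ hp₂p₃
  rw [← Real.Angle.sin_toReal, Real.abs_sin_eq_sin_abs_of_abs_le_pi (Real.Angle.abs_toReal_le_pi _),
    ← angle_eq_abs_oangle_toReal hp₁p₂ hp₂p₃.symm] at key
  have hsin : Real.sin (∠ p₁ p₂ p₃) ≠ 0 := by
    intro h
    rw [h, div_zero, eq_comm, mul_eq_zero_iff_left two_ne_zero] at key
    rw [mem_sphere, key, dist_eq_zero] at hp₁ hp₂
    exact hp₁p₂ (hp₁.trans hp₂.symm)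
  rw [← key, div_mul_cancel₀ _ hsin]

theorem ne_of_angle_eq_angle {A B M : P} (hAB : A ≠ B) (h : ∠ B A M = ∠ A B M) : M ≠ A := by
  rintro rfl
  rw [angle_self_right, angle_self_of_ne hAB] at h
  exact pi_div_two_pos.ne' h

theorem angle_apex_eq_pi_sub_two_mul {A B M : P} (hAB : A ≠ B) (h : ∠ B A M = ∠ A B M) :
    ∠ A M B = π - 2 * ∠ B A M := by
  have hsum := angle_add_angle_add_angle_eq_pi B (ne_of_angle_eq_angle hAB h).symm
  rw [angle_comm M A B, ← h, angle_comm B M A] at hsum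
  linarith

theorem angle_le_pi_div_two_of_angle_eq_angle {A B M : P} (hAB : A ≠ B)
    (h : ∠ B A M = ∠ A B M) : ∠ B A M ≤ π / 2 := by
  have := angle_apex_eq_pi_sub_two_mul hAB h ▸ angle_nonneg A M B
  linarith

theorem Sphere.dist_eq_of_angle_eq_angle [Fact (finrank ℝ V = 2)] {s : Sphere P} {A B M : P}
    (hA : A ∈ s) (hB : B ∈ s) (hM : M ∈ s) (hAB : A ≠ B) (h : ∠ B A M = ∠ A B M) :
    dist M A = 2 * s.radius * Real.sin (∠ B A M) ∧
      dist M B = 2 * s.radius * Real.sin (∠ B A M) ∧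
      dist A B = 2 * s.radius * Real.sin (2 * ∠ B A M) := by
  have hMA := ne_of_angle_eq_angle hAB h
  have hMB := ne_of_angle_eq_angle hAB.symm h.symm
  refine ⟨?_, ?_, ?_⟩
  · rw [s.dist_eq_two_mul_radius_mul_sin_angle hM hB hA hMB hMA hAB.symm, angle_comm, h]
  · rw [s.dist_eq_two_mul_radius_mul_sin_angle hM hA hB hMA hMB hAB, angle_comm]
  · rw [s.dist_eq_two_mul_radius_mul_sin_angle hA hM hB hMA.symm hAB hMB,
      angle_apex_eq_pi_sub_two_mul hAB h, Real.sin_pi_sub]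

end EuclideanGeometry

theorem Real.sqrt_three_le_two_mul_sin {x : ℝ} (h₁ : π / 3 ≤ x) (h₂ : x ≤ π / 2) :
    √3 ≤ 2 * sin x := by
  have := sin_le_sin_of_le_of_le_pi_div_two (by linarith [pi_pos]) h₂ h₁
  rw [sin_pi_div_three] at this
  linarith

theorem Real.eq_pi_div_three_of_two_mul_sin_eq {x : ℝ} (h₁ : π / 3 ≤ x) (h₂ : x ≤ π / 2)
    (h : 2 * sin x = √3) : x = π / 3 := by
  apply injOn_sin ⟨by linarith [pi_pos], h₂⟩ ⟨by linarith [pi_pos], by linarith [pi_pos]⟩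
  rw [sin_pi_div_three]
  linarith

theorem stmt_18_general (A B C M' : EuclideanSpace ℝ (Fin 2))
    (hA : A ∈ Metric.sphere (0 : EuclideanSpace ℝ (Fin 2)) 1)
    (hB : B ∈ Metric.sphere (0 : EuclideanSpace ℝ (Fin 2)) 1)
    (hM : M' ∈ Metric.sphere (0 : EuclideanSpace ℝ (Fin 2)) 1)
    (hAB : A ≠ B)
    (hiso : EuclideanGeometry.angle B A M' = EuclideanGeometry.angle A B M')
    (hfar : Real.pi / 3 ≤ EuclideanGeometry.angle B A M')
    (lam : ℝ) (hlam : 0 < lam) :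
    2 * Real.sqrt 3 ^ lam ≤ dist M' A ^ lam + dist M' B ^ lam + dist M' C ^ lam ∧
    (dist M' A ^ lam + dist M' B ^ lam + dist M' C ^ lam = 2 * Real.sqrt 3 ^ lam →
      dist A B = dist B C ∧ dist B C = dist C A) := by
  have : Fact (finrank ℝ (EuclideanSpace ℝ (Fin 2)) = 2) := ⟨finrank_euclideanSpace_fin⟩
  let s : Sphere (EuclideanSpace ℝ (Fin 2)) := ⟨0, 1⟩
  obtain ⟨hMA, hMB, hAB'⟩ := Sphere.dist_eq_of_angle_eq_angle (s := s) hA hB hM hAB hiso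
  simp only [s, mul_one] at hMA hMB hAB'
  set x := ∠ B A M'
  have hx := angle_le_pi_div_two_of_angle_eq_angle hAB hiso
  have hpow : √3 ^ lam ≤ (2 * sin x) ^ lam :=
    rpow_le_rpow (sqrt_nonneg 3) (sqrt_three_le_two_mul_sin hfar hx) hlam.le
  have hpowC : 0 ≤ dist M' C ^ lam := rpow_nonneg dist_nonneg lam
  rw [hMA, hMB]
  refine ⟨by linarith, fun heq => ?_⟩
  have hMC : M' = C := by
    have : dist M' C ^ lam = 0 := by linarith
    exact dist_eq_zero.1 ((rpow_eq_zero dist_nonneg hlam.ne').1 this)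
  have hsin : 2 * sin x = √3 := by
    by_contra hne
    have := rpow_lt_rpow (sqrt_nonneg 3)
      ((sqrt_three_le_two_mul_sin hfar hx).lt_of_ne' hne) hlam
    linarith
  have hsin2 : 2 * sin (2 * x) = √3 := by
    rw [eq_pi_div_three_of_two_mul_sin_eq hfar hx hsin, show 2 * (π / 3) = π - π / 3 by ring,
      sin_pi_sub, sin_pi_div_three]
    ring
  subst hMC
  rw [hAB', dist_comm B, hMB, hMA, hsin, hsin2]
  exact ⟨rfl, rfl⟩

theorem stmt_18 (A B C M' : EuclideanSpace ℝ (Fin 2))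
    (hA : A ∈ Metric.sphere (0 : EuclideanSpace ℝ (Fin 2)) 1)
    (hB : B ∈ Metric.sphere (0 : EuclideanSpace ℝ (Fin 2)) 1)
    (hC : C ∈ Metric.sphere (0 : EuclideanSpace ℝ (Fin 2)) 1)
    (hM : M' ∈ Metric.sphere (0 : EuclideanSpace ℝ (Fin 2)) 1)
    (hAB : A ≠ B) (hBC : B ≠ C) (hCA : C ≠ A)
    (hshort1 : dist A B ≤ dist B C) (hshort2 : dist A B ≤ dist C A)
    (hiso : EuclideanGeometry.angle B A M' = EuclideanGeometry.angle A B M')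
    (hfar : Real.pi / 3 ≤ EuclideanGeometry.angle B A M')
    (lam : ℝ) (hlam : 0 < lam) :
    2 * Real.sqrt 3 ^ lam ≤ dist M' A ^ lam + dist M' B ^ lam + dist M' C ^ lam ∧
    (dist M' A ^ lam + dist M' B ^ lam + dist M' C ^ lam = 2 * Real.sqrt 3 ^ lam →
      dist A B = dist B C ∧ dist B C = dist C A) :=
  stmt_18_general A B C M' hA hB hM hAB hiso hfar lam hlam
end
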